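/- arXiv:2412.12796 — 4 statements merged into one kernel-verified Lean document; each statement's English description precedes it below -/
import Mathlib

section
/- Fix integers d ≥ 1, an even K ≥ 2, and N ≥ (2d+1)·9^d. There exists a constant C₁ > 0, depending only on d, N and K, with the following property: for every simple graph G whose vertex set is a set of points of ℝ^d, every integer n ≥ N, and all vertices u, w of G with w ∈ B_n(u) and |u − w| > K_{n−1}/8, if both boxes B_n(u) and B_{n−1}(u) are good, then every path in G from u to w that is contained in B_n(u) has at least C₁·|u − w| edges. -/
noncomputable section
open MeasureTheory ProbabilityTheory Filter

/-- Euclidean distance on `ℝ^d` (modelled as `Fin d → ℝ`). -/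
def euclid {d : ℕ} (x y : Fin d → ℝ) : ℝ := Real.sqrt (∑ i, (x i - y i)^2)

/-- Embedding of `ℤ^d` into `ℝ^d`. -/
def castR {d : ℕ} (x : Fin d → ℤ) : Fin d → ℝ := fun i => (x i : ℝ)

/-- The box `Λ_r(c) = c + [-r/2, r/2)^d`. -/
def box {d : ℕ} (c : Fin d → ℝ) (r : ℝ) : Set (Fin d → ℝ) :=
  {p | ∀ i, c i - r/2 ≤ p i ∧ p i < c i + r/2}

/-- `f` is a path of `ℓ` edges from `x` to `y` with respect to the adjacency relation `A`. -/
def IsPathRel {V : Type*} (A : V → V → Prop) (x y : V) (ℓ : ℕ) (f : ℕ → V) : Prop :=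
  f 0 = x ∧ f ℓ = y ∧ ∀ i < ℓ, A (f i) (f (i+1))

/-- The side length `K_n = K·(n!)²` of a stage-`n` box. -/
def Kn (K n : ℕ) : ℝ := (K : ℝ) * (Nat.factorial n : ℝ)^2

/-- No edge of the graph with adjacency relation `A` that is internal to `S` is longer
than `r`. -/
def noLongEdge {d : ℕ} (A : (Fin d → ℝ) → (Fin d → ℝ) → Prop)
    (S : Set (Fin d → ℝ)) (r : ℝ) : Prop :=
  ∀ u v, A u v → u ∈ S → v ∈ S → euclid u v ≤ r

/-- Centre `x + (K_n/2)·j + K_n·(v + ½·𝟙) - (K_{n+1}/2)·𝟙` of the stage-`n` sub-box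
indexed by `v` in the tiling of the translated stage-`(n+1)` box `B_{n+1}^j(x)`. -/
def subCenter {d : ℕ} (K n : ℕ) (x : Fin d → ℝ) (j : Fin d → ℝ) (v : Fin d → ℕ) :
    Fin d → ℝ :=
  fun i => x i + (Kn K n / 2) * j i + Kn K n * ((v i : ℝ) + 1/2) - Kn K (n+1) / 2

/-- Goodness of the stage-`n` box `B_n(x)` for the graph with adjacency relation `A`:
`B_0(x)` is good if it has no internal edge longer than `K_0/100`; `B_{n+1}(x)` is good
if for every `j ∈ {-1,0,1}^d` the translated box `B_{n+1}^j(x)` has no internal edge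
longer than `K_n/100` and at most `3^d` of its `(n+1)^{2d}` stage-`n` sub-boxes are bad. -/
def IsGood {d : ℕ} (A : (Fin d → ℝ) → (Fin d → ℝ) → Prop) (K : ℕ) :
    ℕ → (Fin d → ℝ) → Prop
  | 0, x => noLongEdge A (box x (Kn K 0)) (Kn K 0 / 100)
  | n+1, x => ∀ j : Fin d → ℝ, (∀ i, j i = -1 ∨ j i = 0 ∨ j i = 1) →
      noLongEdge A (box (fun i => x i + (Kn K n / 2) * j i) (Kn K (n+1))) (Kn K n / 100) ∧
      Set.ncard {v : Fin d → Fin ((n+1)^2) |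
        ¬ IsGood A K n (subCenter K n x j (fun i => (v i : ℕ)))} ≤ 3^d

namespace PathProof

open Finset

variable {d : ℕ}

/-! ### Basic facts about `euclid` -/

lemma euclid_nonneg (x y : Fin d → ℝ) : 0 ≤ euclid x y := Real.sqrt_nonneg _

lemma euclid_self (x : Fin d → ℝ) : euclid x x = 0 := by simp [euclid]

lemma coord_le_euclid (x y : Fin d → ℝ) (i : Fin d) : |x i - y i| ≤ euclid x y := by
  rw [euclid, ← Real.sqrt_sq_eq_abs]
  exact Real.sqrt_le_sqrt (Finset.single_le_sum (f := fun i => (x i - y i)^2)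
    (fun _ _ => sq_nonneg _) (mem_univ i))

lemma euclid_le_of_coord {x y : Fin d → ℝ} {c : ℝ} (hc : 0 ≤ c) (h : ∀ i, |x i - y i| ≤ c) :
    euclid x y ≤ Real.sqrt d * c := by
  rw [euclid, ← Real.sqrt_sq hc, ← Real.sqrt_mul (by positivity)]
  apply Real.sqrt_le_sqrt
  calc ∑ i, (x i - y i)^2 ≤ ∑ _i : Fin d, c^2 := by
        refine sum_le_sum fun i _ => ?_
        rw [← sq_abs]; exact pow_le_pow_left₀ (abs_nonneg _) (h i) 2
    _ = d * c^2 := by simp [mul_comm]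

/-! ### The linear functional φ -/

/-- `phi e p = ⟨e, p⟩`. -/
def phi (e p : Fin d → ℝ) : ℝ := ∑ i, e i * p i

lemma phi_sub_le {e : Fin d → ℝ} (he : ∑ i, e i ^ 2 = 1) (p q : Fin d → ℝ) :
    phi e p - phi e q ≤ euclid p q := by
  have h1 : phi e p - phi e q = ∑ i, e i * (p i - q i) := by
    rw [phi, phi, ← Finset.sum_sub_distrib]; congr 1; ext i; ring
  rw [h1]
  have h2 := Finset.sum_mul_sq_le_sq_mul_sq Finset.univ e (fun i => p i - q i)
  rw [he, one_mul] at h2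
  have h3 : ∑ i, e i * (p i - q i) ≤ |∑ i, e i * (p i - q i)| := le_abs_self _
  refine h3.trans ?_
  rw [euclid, ← Real.sqrt_sq_eq_abs]
  exact Real.sqrt_le_sqrt h2

lemma abs_phi_sub_le {e : Fin d → ℝ} (he : ∑ i, e i ^ 2 = 1) (p q : Fin d → ℝ) :
    |phi e p - phi e q| ≤ euclid p q := by
  rcases abs_cases (phi e p - phi e q) with ⟨h, _⟩ | ⟨h, _⟩
  · rw [h]; exact phi_sub_le he p q
  · rw [h]
    have := phi_sub_le he q p
    have h2 : euclid q p = euclid p q := by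
      unfold euclid; congr 1; apply Finset.sum_congr rfl; intro i _; ring_nf
    linarith

/-- the unit vector in direction `b - a`, when `a ≠ b`. -/
lemma exists_unit_dir {a b : Fin d → ℝ} (h : 0 < euclid a b) :
    ∃ e : Fin d → ℝ, (∑ i, e i ^ 2 = 1) ∧ phi e b - phi e a = euclid a b := by
  set D := euclid a b with hD
  have hD2 : D ^ 2 = ∑ i, (a i - b i)^2 := Real.sq_sqrt (by positivity)
  refine ⟨fun i => (b i - a i) / D, ?_, ?_⟩
  · have : ∑ i, ((b i - a i)/D)^2 = (∑ i, (a i - b i)^2) / D^2 := by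
      rw [Finset.sum_div]; apply Finset.sum_congr rfl; intro i _; field_simp; ring
    rw [this, ← hD2, div_self (by positivity)]
  · have : phi (fun i => (b i - a i)/D) b - phi (fun i => (b i - a i)/D) a
        = (∑ i, (a i - b i)^2) / D := by
      rw [phi, phi, ← Finset.sum_sub_distrib, Finset.sum_div]
      apply Finset.sum_congr rfl; intro i _; field_simp; ring
    rw [this, ← hD2, sq]
    field_simp

/-! ### Facts about `Kn` -/

lemma Kn_pos {K : ℕ} (hK2 : 2 ≤ K) (n : ℕ) : 0 < Kn K n := by
  have h1 : (0:ℝ) < (K:ℝ) := by exact_mod_cast Nat.lt_of_lt_of_le (by norm_num) hK2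
  have h2 : (0:ℝ) < (Nat.factorial n : ℝ) := by exact_mod_cast Nat.factorial_pos n
  unfold Kn; positivity

lemma Kn_succ (K n : ℕ) : Kn K (n+1) = ((n:ℝ)+1)^2 * Kn K n := by
  unfold Kn
  rw [Nat.factorial_succ]
  push_cast
  ring

lemma Kn_mono {K : ℕ} (hK2 : 2 ≤ K) {n m : ℕ} (h : n ≤ m) : Kn K n ≤ Kn K m := by
  unfold Kn
  have h1 : (0:ℝ) < (K:ℝ) := by exact_mod_cast Nat.lt_of_lt_of_le (by norm_num) hK2
  apply mul_le_mul_of_nonneg_left _ h1.le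
  have := Nat.factorial_le h
  have h2 : (0:ℝ) ≤ (Nat.factorial n : ℝ) := by positivity
  apply pow_le_pow_left₀ h2
  exact_mod_cast this


/-! ### The function ν and its properties -/

lemma euclid_comm (x y : Fin d → ℝ) : euclid x y = euclid y x := by
  unfold euclid; congr 1; apply Finset.sum_congr rfl; intro i _; ring_nf

/-- `nu e B S q` = Lebesgue measure of `(φ q, B) \ S`. -/
def nu (e : Fin d → ℝ) (B : ℝ) (S : Set ℝ) (q : Fin d → ℝ) : ℝ :=
  (MeasureTheory.volume (Set.Ioo (phi e q) B \ S)).toReal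

lemma nu_vol_ne_top (e : Fin d → ℝ) (B : ℝ) (S : Set ℝ) (q : Fin d → ℝ) :
    MeasureTheory.volume (Set.Ioo (phi e q) B \ S) ≠ ⊤ := by
  apply ne_top_of_le_ne_top _ (measure_mono Set.diff_subset)
  rw [Real.volume_Ioo]; exact ENNReal.ofReal_ne_top

lemma toReal_ofReal_le_max (a : ℝ) : (ENNReal.ofReal a).toReal ≤ max 0 a := by
  rcases le_or_gt a 0 with h | h
  · simp [ENNReal.ofReal_eq_zero.mpr h]
  · rw [ENNReal.toReal_ofReal h.le]; exact le_max_right _ _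

lemma nu_le (e : Fin d → ℝ) (B : ℝ) (S : Set ℝ) (q : Fin d → ℝ) :
    nu e B S q ≤ max 0 (B - phi e q) := by
  unfold nu
  have h1 : MeasureTheory.volume (Set.Ioo (phi e q) B \ S) ≤ ENNReal.ofReal (B - phi e q) := by
    rw [← Real.volume_Ioo]; exact measure_mono Set.diff_subset
  calc (MeasureTheory.volume (Set.Ioo (phi e q) B \ S)).toReal
      ≤ (ENNReal.ofReal (B - phi e q)).toReal := ENNReal.toReal_mono ENNReal.ofReal_ne_top h1
    _ ≤ max 0 (B - phi e q) := toReal_ofReal_le_max _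

lemma nu_sub_le (e : Fin d → ℝ) (B : ℝ) (S : Set ℝ) (p q : Fin d → ℝ) :
    nu e B S p - nu e B S q ≤ max 0 (phi e q - phi e p) := by
  have hsub : Set.Ioo (phi e p) B \ S ⊆ (Set.Ioo (phi e q) B \ S) ∪ Set.Ioc (phi e p) (phi e q) := by
    intro z hz
    rcases lt_or_ge (phi e q) z with h2 | h2
    · exact Or.inl ⟨⟨h2, hz.1.2⟩, hz.2⟩
    · exact Or.inr ⟨hz.1.1, h2⟩
  have h4 : MeasureTheory.volume (Set.Ioo (phi e p) B \ S)
      ≤ MeasureTheory.volume (Set.Ioo (phi e q) B \ S)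
        + MeasureTheory.volume (Set.Ioc (phi e p) (phi e q)) :=
    (measure_mono hsub).trans (measure_union_le _ _)
  rw [Real.volume_Ioc] at h4
  have hne : MeasureTheory.volume (Set.Ioo (phi e q) B \ S) + ENNReal.ofReal (phi e q - phi e p) ≠ ⊤ :=
    ENNReal.add_ne_top.mpr ⟨nu_vol_ne_top e B S q, ENNReal.ofReal_ne_top⟩
  have h6 := ENNReal.toReal_mono hne h4
  rw [ENNReal.toReal_add (nu_vol_ne_top e B S q) ENNReal.ofReal_ne_top] at h6
  have h7 := toReal_ofReal_le_max (phi e q - phi e p)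
  unfold nu; linarith

lemma nu_mono_of_bad (e : Fin d → ℝ) (B : ℝ) (S : Set ℝ) (p q : Fin d → ℝ) {c r : ℝ}
    (hp : |phi e p - c| ≤ r) (hq : |phi e q - c| ≤ r)
    (hS : Set.Icc (c - r) (c + r) ⊆ S) :
    nu e B S p ≤ nu e B S q := by
  have hsub : Set.Ioo (phi e p) B \ S ⊆ Set.Ioo (phi e q) B \ S := by
    intro z hz
    refine ⟨⟨?_, hz.1.2⟩, hz.2⟩
    by_contra h2
    push_neg at h2
    apply hz.2
    apply hS
    have h3 := abs_le.mp hp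
    have h4 := abs_le.mp hq
    exact ⟨by linarith [hz.1.1], by linarith⟩
  exact ENNReal.toReal_mono (nu_vol_ne_top e B S q) (measure_mono hsub)

lemma nu_start (e : Fin d → ℝ) (B : ℝ) (S : Set ℝ) (a : Fin d → ℝ) {sv : ℝ} (hsv0 : 0 ≤ sv)
    (hsv : MeasureTheory.volume S ≤ ENNReal.ofReal sv) :
    B - phi e a - sv ≤ nu e B S a := by
  have h1 : MeasureTheory.volume (Set.Ioo (phi e a) B)
      ≤ MeasureTheory.volume (Set.Ioo (phi e a) B \ S) + MeasureTheory.volume S := by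
    calc MeasureTheory.volume (Set.Ioo (phi e a) B)
        ≤ MeasureTheory.volume ((Set.Ioo (phi e a) B \ S) ∪ S) := by
          apply measure_mono; intro z hz
          by_cases h : z ∈ S
          · exact Or.inr h
          · exact Or.inl ⟨hz, h⟩
      _ ≤ _ := measure_union_le _ _
  rw [Real.volume_Ioo] at h1
  have h2 := h1.trans (add_le_add le_rfl hsv)
  have h3 : (ENNReal.ofReal (B - phi e a)).toReal
      ≤ (MeasureTheory.volume (Set.Ioo (phi e a) B \ S) + ENNReal.ofReal sv).toReal := by
    apply ENNReal.toReal_mono _ h2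
    exact ENNReal.add_ne_top.mpr ⟨nu_vol_ne_top e B S a, ENNReal.ofReal_ne_top⟩
  rw [ENNReal.toReal_add (nu_vol_ne_top e B S a) ENNReal.ofReal_ne_top] at h3
  have h4 : B - phi e a ≤ (ENNReal.ofReal (B - phi e a)).toReal := by
    rcases le_or_gt (B - phi e a) 0 with h | h
    · simp [ENNReal.ofReal_eq_zero.mpr h]; linarith
    · rw [ENNReal.toReal_ofReal h.le]
  have h5 : (ENNReal.ofReal sv).toReal ≤ sv := by
    rw [ENNReal.toReal_ofReal hsv0]
  unfold nu; linarith


/-! ### The core induction: decomposing a path into pieces -/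

lemma stepCore {A : (Fin d → ℝ) → (Fin d → ℝ) → Prop} {κ C : ℝ} (hκ : 0 < κ) (hC : 0 ≤ C)
    {e : Fin d → ℝ} (he : ∑ i, e i ^ 2 = 1) {b : Fin d → ℝ} {S : Set ℝ}
    {Box : Set (Fin d → ℝ)}
    (hEdge : ∀ p q, A p q → p ∈ Box → q ∈ Box → euclid p q ≤ κ/100)
    (hCover : ∀ p ∈ Box, ∃ y : Fin d → ℝ,
      (∀ i, |p i - y i| ≤ κ/4) ∧
      ((∀ (t : ℕ) (g : ℕ → Fin d → ℝ), (∀ s ≤ t, g s ∈ box y κ) →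
          (∀ s < t, A (g s) (g (s+1))) → κ/8 ≤ euclid (g 0) (g t) →
          C * euclid (g 0) (g t) ≤ t) ∨
        Set.Icc (phi e y - Real.sqrt d * κ / 2) (phi e y + Real.sqrt d * κ / 2) ⊆ S)) :
    ∀ ℓ : ℕ, ∀ f : ℕ → Fin d → ℝ, (∀ t ≤ ℓ, f t ∈ Box) → (∀ t < ℓ, A (f t) (f (t+1))) →
      f ℓ = b →
      C * (nu e (phi e b) S (f 0) - Real.sqrt d * (κ/8 + κ/100)) ≤ ℓ := by
  intro ℓ
  induction ℓ using Nat.strong_induction_on with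
  | _ ℓ IH =>
    intro f hmem hadj hfl
    classical
    have hd0 : (0:ℝ) ≤ Real.sqrt d := Real.sqrt_nonneg _
    by_cases hex : ∃ t, t ≤ ℓ ∧ ∃ i, κ/8 < |f t i - f 0 i|
    · -- there is a completed piece
      obtain ⟨T, ⟨hTle, iT, hiT⟩, hminraw⟩ :
          ∃ T, (T ≤ ℓ ∧ ∃ i, κ/8 < |f T i - f 0 i|) ∧
            ∀ t < T, ¬(t ≤ ℓ ∧ ∃ i, κ/8 < |f t i - f 0 i|) :=
        ⟨Nat.find hex, Nat.find_spec hex, fun t ht => Nat.find_min hex ht⟩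
      have hmin : ∀ t < T, ∀ i, |f t i - f 0 i| ≤ κ/8 := by
        intro t ht i
        by_contra hcon
        push_neg at hcon
        exact hminraw t ht ⟨by omega, i, hcon⟩
      have hT1 : 1 ≤ T := by
        rcases Nat.eq_zero_or_pos T with h | h
        · exfalso
          rw [h] at hiT
          simp only [sub_self, abs_zero] at hiT
          linarith
        · exact h
      -- the edge from T-1 to T
      have hTm1 : T - 1 < ℓ := by omega
      have hTeq : T - 1 + 1 = T := by omega
      have hedge : euclid (f (T-1)) (f T) ≤ κ/100 := by
        have := hadj (T-1) hTm1
        rw [hTeq] at this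
        exact hEdge _ _ this (hmem _ (by omega)) (hmem _ (by omega))
      -- coordinates of f T relative to f 0
      have hqcoord : ∀ i, |f T i - f 0 i| ≤ κ/8 + κ/100 := by
        intro i
        have h1 : |f T i - f (T-1) i| ≤ κ/100 := by
          have := coord_le_euclid (f T) (f (T-1)) i
          rw [euclid_comm] at this
          exact this.trans hedge
        have h2 : |f (T-1) i - f 0 i| ≤ κ/8 := hmin (T-1) (by omega) i
        calc |f T i - f 0 i| ≤ |f T i - f (T-1) i| + |f (T-1) i - f 0 i| := abs_sub_le _ _ _
          _ ≤ κ/100 + κ/8 := add_le_add h1 h2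
          _ = κ/8 + κ/100 := by ring
      have hdup : euclid (f 0) (f T) ≤ Real.sqrt d * (κ/8 + κ/100) := by
        apply euclid_le_of_coord (by linarith)
        intro i
        rw [abs_sub_comm]
        exact hqcoord i
      have hdlow : κ/8 ≤ euclid (f 0) (f T) := by
        have := coord_le_euclid (f 0) (f T) iT
        rw [abs_sub_comm] at this
        linarith
      -- the covering box around f 0
      obtain ⟨y, hy1, hy2⟩ := hCover (f 0) (hmem 0 (Nat.zero_le _))
      have hyin : ∀ t ≤ T, f t ∈ box y κ := by
        intro t ht i
        have h1 : |f t i - f 0 i| ≤ κ/8 + κ/100 := by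
          rcases lt_or_eq_of_le ht with h | h
          · have := hmin t h i; linarith
          · rw [h]; exact hqcoord i
        have h2 : |f t i - y i| ≤ κ/8 + κ/100 + κ/4 := by
          calc |f t i - y i| ≤ |f t i - f 0 i| + |f 0 i - y i| := abs_sub_le _ _ _
            _ ≤ (κ/8 + κ/100) + κ/4 := add_le_add h1 (hy1 i)
        have h3 := abs_le.mp h2
        constructor
        · linarith [h3.1]
        · linarith [h3.2]
      -- bound C * (nu p - nu q) ≤ T
      have hkey : C * (nu e (phi e b) S (f 0) - nu e (phi e b) S (f T)) ≤ (T:ℝ) := by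
        rcases hy2 with hgood | hbad
        · -- good piece: recursive estimate
          have hrate := hgood T f (fun s hs => hyin s hs) (fun s hs => hadj s (lt_of_lt_of_le hs hTle)) hdlow
          have h1 : nu e (phi e b) S (f 0) - nu e (phi e b) S (f T) ≤ euclid (f 0) (f T) := by
            have h2 := nu_sub_le e (phi e b) S (f 0) (f T)
            have h3 : phi e (f T) - phi e (f 0) ≤ euclid (f 0) (f T) := by
              have := phi_sub_le he (f T) (f 0)
              rw [euclid_comm] at this
              exact this
            have h4 : max 0 (phi e (f T) - phi e (f 0)) ≤ euclid (f 0) (f T) :=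
              max_le (euclid_nonneg _ _) h3
            linarith
          calc C * (nu e (phi e b) S (f 0) - nu e (phi e b) S (f T))
              ≤ C * euclid (f 0) (f T) := by
                apply mul_le_mul_of_nonneg_left h1 hC
            _ ≤ T := hrate
        · -- bad piece: nu does not decrease
          have h1 : nu e (phi e b) S (f 0) ≤ nu e (phi e b) S (f T) := by
            apply nu_mono_of_bad e (phi e b) S (f 0) (f T) _ _ hbad
            · have h2 : euclid (f 0) y ≤ Real.sqrt d * (κ/4) :=
                euclid_le_of_coord (by linarith) hy1
              have h3 := abs_phi_sub_le he (f 0) y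
              have h4 : Real.sqrt d * (κ/4) ≤ Real.sqrt d * κ / 2 := by nlinarith
              calc |phi e (f 0) - phi e y| ≤ euclid (f 0) y := h3
                _ ≤ Real.sqrt d * κ / 2 := h2.trans h4
            · have h2 : euclid (f T) y ≤ Real.sqrt d * (κ/8 + κ/100 + κ/4) := by
                apply euclid_le_of_coord (by linarith)
                intro i
                calc |f T i - y i| ≤ |f T i - f 0 i| + |f 0 i - y i| := abs_sub_le _ _ _
                  _ ≤ (κ/8 + κ/100) + κ/4 := add_le_add (hqcoord i) (hy1 i)
                  _ = κ/8 + κ/100 + κ/4 := by ring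
              have h3 := abs_phi_sub_le he (f T) y
              have h4 : Real.sqrt d * (κ/8 + κ/100 + κ/4) ≤ Real.sqrt d * κ / 2 := by nlinarith
              calc |phi e (f T) - phi e y| ≤ euclid (f T) y := h3
                _ ≤ Real.sqrt d * κ / 2 := h2.trans h4
          nlinarith [Nat.cast_nonneg (α := ℝ) T]
      -- apply IH to the rest of the path
      have hrest := IH (ℓ - T) (by omega) (fun s => f (T + s))
        (fun t ht => hmem (T + t) (by omega))
        (fun t ht => hadj (T + t) (by omega))
        (by
          show f (T + (ℓ - T)) = b
          rw [show T + (ℓ - T) = ℓ from by omega]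
          exact hfl)
      have hrest' : C * (nu e (phi e b) S (f T) - Real.sqrt d * (κ/8 + κ/100)) ≤ ((ℓ - T : ℕ):ℝ) :=
        hrest
      have hcast : ((ℓ - T : ℕ):ℝ) = (ℓ:ℝ) - (T:ℝ) := Nat.cast_sub hTle
      rw [hcast] at hrest'
      linarith [hrest', hkey]
    · -- no completed piece: whole path is short
      push_neg at hex
      have h1 : euclid (f 0) b ≤ Real.sqrt d * (κ/8) := by
        rw [← hfl]
        apply euclid_le_of_coord (by linarith)
        intro i
        rw [abs_sub_comm]
        exact hex ℓ le_rfl i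
      have h2 : nu e (phi e b) S (f 0) ≤ Real.sqrt d * (κ/8) := by
        have h3 := nu_le e (phi e b) S (f 0)
        have h4 : phi e b - phi e (f 0) ≤ euclid (f 0) b := by
          have := phi_sub_le he b (f 0)
          rw [euclid_comm] at this
          exact this
        have h5 : max 0 (phi e b - phi e (f 0)) ≤ Real.sqrt d * (κ/8) := by
          apply max_le (by positivity)
          linarith
        linarith
      have h6 : C * (nu e (phi e b) S (f 0) - Real.sqrt d * (κ/8 + κ/100)) ≤ 0 := by
        apply mul_nonpos_of_nonneg_of_nonpos hC
        nlinarith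
      calc C * (nu e (phi e b) S (f 0) - Real.sqrt d * (κ/8 + κ/100)) ≤ 0 := h6
        _ ≤ ℓ := Nat.cast_nonneg _


/-! ### The grid covering lemma -/

lemma grid1 (M : ℕ) (hM : 1 ≤ M) (σ : ℝ) (h0 : 0 ≤ σ) (h1 : σ < M) :
    ∃ (j : ℝ) (v : ℕ), (j = -1 ∨ j = 0 ∨ j = 1) ∧ v < M ∧
      |j/2 + (v:ℝ) + 1/2 - σ| ≤ 1/4 := by
  set h : ℤ := ⌊2*σ + 1/2⌋ with hh
  have hfl : (h:ℝ) ≤ 2*σ + 1/2 := Int.floor_le _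
  have hfl2 : 2*σ + 1/2 < (h:ℝ) + 1 := Int.lt_floor_add_one _
  have hh0 : 0 ≤ h := by
    rw [hh]
    apply Int.le_floor.mpr
    push_cast
    linarith
  have hh2M : h ≤ 2*M := by
    have : (h:ℝ) < 2*M + 1 := by linarith
    exact_mod_cast Int.lt_add_one_iff.mp (by exact_mod_cast this)
  have key : ∀ (j : ℝ) (v : ℕ), 2*(v:ℝ) + j + 1 = (h:ℝ) → |j/2 + (v:ℝ) + 1/2 - σ| ≤ 1/4 := by
    intro j v hjv
    rw [abs_le]
    constructor
    · have : j/2 + (v:ℝ) + 1/2 = (h:ℝ)/2 := by linarith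
      rw [this]; linarith
    · have : j/2 + (v:ℝ) + 1/2 = (h:ℝ)/2 := by linarith
      rw [this]; linarith
  rcases Int.even_or_odd h with ⟨k, hk⟩ | ⟨k, hk⟩
  · -- h = 2k
    have hk0 : 0 ≤ k := by omega
    have hkM : k ≤ M := by omega
    rcases lt_or_eq_of_le hkM with hlt | heq
    · refine ⟨-1, k.toNat, Or.inl rfl, by omega, key _ _ ?_⟩
      have hz : 2*((k.toNat:ℕ):ℤ) + (-1) + 1 = h := by omega
      exact_mod_cast hz
    · refine ⟨1, M - 1, Or.inr (Or.inr rfl), by omega, key _ _ ?_⟩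
      have hz : 2*(((M-1:ℕ)):ℤ) + 1 + 1 = h := by omega
      exact_mod_cast hz
  · -- h = 2k + 1
    have hk0 : 0 ≤ k := by omega
    have hkM : k < M := by omega
    refine ⟨0, k.toNat, Or.inr (Or.inl rfl), by omega, key _ _ ?_⟩
    have hz : 2*((k.toNat:ℕ):ℤ) + 0 + 1 = h := by omega
    exact_mod_cast hz

lemma gridCover {K : ℕ} (hK2 : 2 ≤ K) (s : ℕ) (x p : Fin d → ℝ)
    (hp : p ∈ box x (Kn K (s+1))) :
    ∃ (j : Fin d → ℝ) (v : Fin d → Fin ((s+1)^2)),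
      (∀ i, j i = -1 ∨ j i = 0 ∨ j i = 1) ∧
      ∀ i, |p i - subCenter K s x j (fun i => (v i : ℕ)) i| ≤ Kn K s / 4 := by
  have hκ : 0 < Kn K s := Kn_pos hK2 s
  have hKM : Kn K (s+1) = ((s:ℝ)+1)^2 * Kn K s := Kn_succ K s
  have hM1 : 1 ≤ (s+1)^2 := Nat.one_le_iff_ne_zero.mpr (by positivity)
  have H : ∀ i : Fin d, ∃ (ji : ℝ) (vi : ℕ), (ji = -1 ∨ ji = 0 ∨ ji = 1) ∧ vi < (s+1)^2 ∧
      |ji/2 + (vi:ℝ) + 1/2 - (p i - x i + Kn K (s+1)/2) / Kn K s| ≤ 1/4 := by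
    intro i
    apply grid1 _ hM1
    · have := (hp i).1
      apply div_nonneg _ hκ.le
      linarith
    · have := (hp i).2
      rw [div_lt_iff₀ hκ]
      have hcast : (((s+1)^2 : ℕ) : ℝ) = ((s:ℝ)+1)^2 := by push_cast; ring
      rw [hcast, ← hKM]
      linarith
  choose j v hj hv habs using H
  refine ⟨j, fun i => ⟨v i, hv i⟩, hj, fun i => ?_⟩
  have h1 := habs i
  set σ := (p i - x i + Kn K (s+1)/2) / Kn K s with hσ
  have hσK : σ * Kn K s = p i - x i + Kn K (s+1)/2 := by
    rw [hσ]; field_simp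
  have hpi : p i = x i + σ * Kn K s - Kn K (s+1)/2 := by linarith
  have h2 : p i - subCenter K s x j (fun i => (v i : ℕ)) i
      = -(Kn K s) * (j i/2 + (v i:ℝ) + 1/2 - σ) := by
    rw [hpi]
    unfold subCenter
    push_cast
    ring
  rw [h2, abs_mul, abs_neg, abs_of_pos hκ]
  calc Kn K s * |j i/2 + (v i:ℝ) + 1/2 - σ| ≤ Kn K s * (1/4) := by
        apply mul_le_mul_of_nonneg_left h1 hκ.le
    _ = Kn K s / 4 := by ring


/-! ### Step lemma -/

/-- Map `Fin 3` values to `{-1,0,1}`. -/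
def jmap (jc : Fin 3) : ℝ := ((jc : ℕ) : ℝ) - 1

lemma jmap_mem (jc : Fin 3) : jmap jc = -1 ∨ jmap jc = 0 ∨ jmap jc = 1 := by
  have : (jc : ℕ) = 0 ∨ (jc : ℕ) = 1 ∨ (jc : ℕ) = 2 := by omega
  rcases this with h | h | h
  · left; norm_num [jmap, h]
  · right; left; norm_num [jmap, h]
  · right; right; norm_num [jmap, h]

lemma gridCover' {K : ℕ} (hK2 : 2 ≤ K) (s : ℕ) (x p : Fin d → ℝ)
    (hp : p ∈ box x (Kn K (s+1))) :
    ∃ (jc : Fin d → Fin 3) (v : Fin d → Fin ((s+1)^2)),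
      ∀ i, |p i - subCenter K s x (fun i => jmap (jc i)) (fun i => (v i : ℕ)) i| ≤ Kn K s / 4 := by
  obtain ⟨j, v, hj, habs⟩ := gridCover hK2 s x p hp
  classical
  refine ⟨fun i => if j i = -1 then (0 : Fin 3) else if j i = 0 then 1 else 2, v, ?_⟩
  have hjj : (fun i => jmap (if j i = -1 then (0 : Fin 3) else if j i = 0 then 1 else 2)) = j := by
    funext i
    rcases hj i with h | h | h
    · rw [h]; norm_num [jmap]
    · rw [h]; norm_num [jmap]
    · rw [h]; norm_num [jmap]
  rw [hjj]
  exact habs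

lemma step {K : ℕ} (hK2 : 2 ≤ K) (s : ℕ) (x : Fin d → ℝ)
    {A : (Fin d → ℝ) → (Fin d → ℝ) → Prop}
    (hGood : IsGood A K (s+1) x) {C : ℝ} (hC : 0 ≤ C)
    (hRec : ∀ y : Fin d → ℝ, IsGood A K s y → ∀ (t : ℕ) (g : ℕ → Fin d → ℝ),
      (∀ r ≤ t, g r ∈ box y (Kn K s)) → (∀ r < t, A (g r) (g (r+1))) →
      Kn K s / 8 ≤ euclid (g 0) (g t) → C * euclid (g 0) (g t) ≤ t) :
    ∀ (ℓ : ℕ) (f : ℕ → Fin d → ℝ), (∀ t ≤ ℓ, f t ∈ box x (Kn K (s+1))) →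
      (∀ t < ℓ, A (f t) (f (t+1))) →
      C * (euclid (f 0) (f ℓ) - ((9:ℝ)^d + 1) * Real.sqrt d * Kn K s) ≤ ℓ := by
  classical
  intro ℓ f hmem hadj
  set κ := Kn K s with hκdef
  have hκ : 0 < κ := Kn_pos hK2 s
  have hd0 : (0:ℝ) ≤ Real.sqrt d := Real.sqrt_nonneg _
  have hloss : (0:ℝ) ≤ ((9:ℝ)^d + 1) * Real.sqrt d * κ := by positivity
  rcases le_or_gt (euclid (f 0) (f ℓ)) (((9:ℝ)^d + 1) * Real.sqrt d * κ) with htriv | hD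
  · have h1 : C * (euclid (f 0) (f ℓ) - ((9:ℝ)^d + 1) * Real.sqrt d * κ) ≤ 0 :=
      mul_nonpos_of_nonneg_of_nonpos hC (by linarith)
    exact h1.trans (Nat.cast_nonneg _)
  · have hDpos : 0 < euclid (f 0) (f ℓ) := lt_of_le_of_lt hloss hD
    obtain ⟨e, he, hphiD⟩ := exists_unit_dir hDpos
    -- the set of bad intervals
    set ctr : (Fin d → Fin 3) → (Fin d → Fin ((s+1)^2)) → (Fin d → ℝ) :=
      fun jc v => subCenter K s x (fun i => jmap (jc i)) (fun i => (v i : ℕ)) with hctr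
    set S : Set ℝ := ⋃ (jc : Fin d → Fin 3), ⋃ (v : Fin d → Fin ((s+1)^2)),
      ⋃ (_ : ¬ IsGood A K s (ctr jc v)),
        Set.Icc (phi e (ctr jc v) - Real.sqrt d * κ / 2) (phi e (ctr jc v) + Real.sqrt d * κ / 2)
      with hS
    -- edge bound
    have hEdge : ∀ p q, A p q → p ∈ box x (Kn K (s+1)) → q ∈ box x (Kn K (s+1)) →
        euclid p q ≤ κ/100 := by
      intro p q hpq hp hq
      have h0 := (hGood (fun _ => 0) (fun i => Or.inr (Or.inl rfl))).1
      have hbx : (box (fun i => x i + (Kn K s / 2) * (0:ℝ)) (Kn K (s+1))) = box x (Kn K (s+1)) := by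
        congr 1
        funext i
        ring
      rw [hbx] at h0
      exact h0 p q hpq hp hq
    -- measure of S
    have hvolS : MeasureTheory.volume S ≤ ENNReal.ofReal ((9:ℝ)^d * Real.sqrt d * κ) := by
      have hstep1 : MeasureTheory.volume S ≤ ∑ jc : Fin d → Fin 3,
          MeasureTheory.volume (⋃ (v : Fin d → Fin ((s+1)^2)),
            ⋃ (_ : ¬ IsGood A K s (ctr jc v)),
            Set.Icc (phi e (ctr jc v) - Real.sqrt d * κ / 2)
              (phi e (ctr jc v) + Real.sqrt d * κ / 2)) := by
        rw [hS]
        exact measure_iUnion_fintype_le _ _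
      have hstep2 : ∀ jc : Fin d → Fin 3,
          MeasureTheory.volume (⋃ (v : Fin d → Fin ((s+1)^2)),
            ⋃ (_ : ¬ IsGood A K s (ctr jc v)),
            Set.Icc (phi e (ctr jc v) - Real.sqrt d * κ / 2)
              (phi e (ctr jc v) + Real.sqrt d * κ / 2))
          ≤ (3^d : ℕ) * ENNReal.ofReal (Real.sqrt d * κ) := by
        intro jc
        have h1 : MeasureTheory.volume (⋃ (v : Fin d → Fin ((s+1)^2)),
            ⋃ (_ : ¬ IsGood A K s (ctr jc v)),
            Set.Icc (phi e (ctr jc v) - Real.sqrt d * κ / 2)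
              (phi e (ctr jc v) + Real.sqrt d * κ / 2))
            ≤ ∑ v : Fin d → Fin ((s+1)^2),
              (if ¬ IsGood A K s (ctr jc v) then ENNReal.ofReal (Real.sqrt d * κ) else 0) := by
          refine (measure_iUnion_fintype_le _ _).trans ?_
          apply Finset.sum_le_sum
          intro v _
          by_cases h : ¬ IsGood A K s (ctr jc v)
          · rw [if_pos h]
            have hset : (⋃ (_ : ¬ IsGood A K s (ctr jc v)),
                Set.Icc (phi e (ctr jc v) - Real.sqrt d * κ / 2)
                  (phi e (ctr jc v) + Real.sqrt d * κ / 2))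
                = Set.Icc (phi e (ctr jc v) - Real.sqrt d * κ / 2)
                  (phi e (ctr jc v) + Real.sqrt d * κ / 2) := by
              simp [h]
            rw [hset, Real.volume_Icc]
            apply le_of_eq
            congr 1
            ring
          · rw [if_neg h]
            have hset : (⋃ (_ : ¬ IsGood A K s (ctr jc v)),
                Set.Icc (phi e (ctr jc v) - Real.sqrt d * κ / 2)
                  (phi e (ctr jc v) + Real.sqrt d * κ / 2)) = ∅ := by
              simp [h]
            rw [hset]
            simp
        have h2 : ∑ v : Fin d → Fin ((s+1)^2),
            (if ¬ IsGood A K s (ctr jc v) then ENNReal.ofReal (Real.sqrt d * κ) else 0)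
            = (Finset.univ.filter (fun v => ¬ IsGood A K s (ctr jc v))).card
              * ENNReal.ofReal (Real.sqrt d * κ) := by
          rw [Finset.sum_ite, Finset.sum_const, Finset.sum_const_zero, add_zero, nsmul_eq_mul]
        have h3 : (Finset.univ.filter (fun v => ¬ IsGood A K s (ctr jc v))).card ≤ 3^d := by
          have hnc := (hGood (fun i => jmap (jc i)) (fun i => jmap_mem _)).2
          have heq : {v : Fin d → Fin ((s+1)^2) |
              ¬ IsGood A K s (subCenter K s x (fun i => jmap (jc i)) (fun i => (v i : ℕ)))}.ncard
              = (Finset.univ.filter (fun v => ¬ IsGood A K s (ctr jc v))).card := by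
            rw [Set.ncard_eq_toFinset_card']
            congr 1
            ext v
            simp [hctr]
          rw [heq] at hnc
          exact hnc
        refine h1.trans (h2.trans_le ?_)
        apply mul_le_mul_left
        exact_mod_cast h3
      have hstep3 : MeasureTheory.volume S
          ≤ (3^d : ℕ) * ((3^d : ℕ) * ENNReal.ofReal (Real.sqrt d * κ)) := by
        refine hstep1.trans ?_
        calc ∑ jc : Fin d → Fin 3, MeasureTheory.volume (⋃ (v : Fin d → Fin ((s+1)^2)),
              ⋃ (_ : ¬ IsGood A K s (ctr jc v)),
              Set.Icc (phi e (ctr jc v) - Real.sqrt d * κ / 2)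
                (phi e (ctr jc v) + Real.sqrt d * κ / 2))
            ≤ ∑ _jc : Fin d → Fin 3, (3^d : ℕ) * ENNReal.ofReal (Real.sqrt d * κ) :=
              Finset.sum_le_sum (fun jc _ => hstep2 jc)
          _ = (Fintype.card (Fin d → Fin 3)) * ((3^d : ℕ) * ENNReal.ofReal (Real.sqrt d * κ)) := by
              rw [Finset.sum_const, nsmul_eq_mul]
              congr 1
          _ = (3^d : ℕ) * ((3^d : ℕ) * ENNReal.ofReal (Real.sqrt d * κ)) := by
              congr 2
              simp [Fintype.card_fun]
      refine hstep3.trans ?_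
      rw [← mul_assoc, ← Nat.cast_mul]
      have hc : (3:ℕ)^d * 3^d = 9^d := by
        rw [← mul_pow]
        norm_num
      rw [hc]
      have h9 : ((9:ℝ))^d * Real.sqrt d * κ = ((9^d : ℕ):ℝ) * (Real.sqrt d * κ) := by
        push_cast
        ring
      rw [h9, ENNReal.ofReal_mul (p := ((9^d : ℕ):ℝ)) (by positivity),
        ENNReal.ofReal_natCast]
    -- cover hypothesis
    have hCover : ∀ p ∈ box x (Kn K (s+1)), ∃ y : Fin d → ℝ,
        (∀ i, |p i - y i| ≤ κ/4) ∧
        ((∀ (t : ℕ) (g : ℕ → Fin d → ℝ), (∀ r ≤ t, g r ∈ box y κ) →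
            (∀ r < t, A (g r) (g (r+1))) → κ/8 ≤ euclid (g 0) (g t) →
            C * euclid (g 0) (g t) ≤ t) ∨
          Set.Icc (phi e y - Real.sqrt d * κ / 2) (phi e y + Real.sqrt d * κ / 2) ⊆ S) := by
      intro p hp
      obtain ⟨jc, v, habs⟩ := gridCover' hK2 s x p hp
      refine ⟨ctr jc v, habs, ?_⟩
      by_cases hg : IsGood A K s (ctr jc v)
      · exact Or.inl (hRec _ hg)
      · refine Or.inr ?_
        rw [hS]
        intro z hz
        exact Set.mem_iUnion.mpr ⟨jc, Set.mem_iUnion.mpr ⟨v, Set.mem_iUnion.mpr ⟨hg, hz⟩⟩⟩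
    have hcore := stepCore hκ hC he (b := f ℓ) hEdge hCover ℓ f hmem hadj rfl
    have hnu := nu_start e (phi e (f ℓ)) S (f 0) (by positivity) hvolS
    rw [hphiD] at hnu
    have hfinal : euclid (f 0) (f ℓ) - ((9:ℝ)^d + 1) * Real.sqrt d * κ
        ≤ nu e (phi e (f ℓ)) S (f 0) - Real.sqrt d * (κ/8 + κ/100) := by
      have h1 : Real.sqrt d * (κ/8 + κ/100) ≤ Real.sqrt d * κ := by nlinarith
      nlinarith
    calc C * (euclid (f 0) (f ℓ) - ((9:ℝ)^d + 1) * Real.sqrt d * κ)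
        ≤ C * (nu e (phi e (f ℓ)) S (f 0) - Real.sqrt d * (κ/8 + κ/100)) :=
          mul_le_mul_of_nonneg_left hfinal hC
      _ ≤ ℓ := hcore


/-! ### Constants -/

/-- loss fraction at scale `j`. -/
def delta (d j : ℕ) : ℝ := 8 * (((9:ℝ)^d + 1) * Real.sqrt d) / (j:ℝ)^2

/-- the rate constant at scale `m`, relative to base scale `n₀`. -/
def Cconst (d K n₀ m : ℕ) : ℝ :=
  (100 / Kn K (n₀ - 1)) * ∏ j ∈ Finset.Ioc n₀ m, (1 - delta d j)

lemma N_sq_large {d N : ℕ} (hd : 1 ≤ d) (hN : (2*d+1) * 9^d ≤ N) :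
    16 * (((9:ℝ)^d + 1) * Real.sqrt d) ≤ ((N:ℝ) - 1)^2 := by
  have h9 : (1:ℝ) + 8*d ≤ (9:ℝ)^d := by
    have := one_add_mul_le_pow (a := (8:ℝ)) (by norm_num) d
    calc (1:ℝ) + 8*d = 1 + d*8 := by ring
      _ ≤ (1+8)^d := this
      _ = (9:ℝ)^d := by norm_num
  have hsd : Real.sqrt d ≤ d := by
    have h1 : Real.sqrt d ≤ Real.sqrt ((d:ℝ)^2) := by
      apply Real.sqrt_le_sqrt
      have : (1:ℝ) ≤ (d:ℝ) := by exact_mod_cast hd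
      nlinarith
    rwa [Real.sqrt_sq (by positivity)] at h1
  have hdr : (1:ℝ) ≤ (d:ℝ) := by exact_mod_cast hd
  have h90 : (1:ℝ) ≤ (9:ℝ)^d := one_le_pow₀ (by norm_num)
  -- (2d+1) * 9^d ≤ N, so N - 1 ≥ (2d+1)*9^d - 1 ≥ ... and ((2d+1)9^d)^2 ≥ big
  have hNr : ((2*(d:ℝ)+1) * (9:ℝ)^d) ≤ (N:ℝ) := by
    have : (((2*d+1) * 9^d : ℕ):ℝ) ≤ (N:ℝ) := by exact_mod_cast hN
    push_cast at this
    linarith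
  have hNb : (3:ℝ) * (9:ℝ)^d ≤ (N:ℝ) := by nlinarith
  have hN1 : (3:ℝ) * (9:ℝ)^d - 1 ≤ (N:ℝ) - 1 := by linarith
  have hgoal : 16 * (((9:ℝ)^d + 1) * (d:ℝ)) ≤ ((3:ℝ)*(9:ℝ)^d - 1)^2 := by nlinarith
  have hmul : 16 * (((9:ℝ)^d + 1) * Real.sqrt d) ≤ 16 * (((9:ℝ)^d + 1) * (d:ℝ)) := by nlinarith
  have hsq : ((3:ℝ)*(9:ℝ)^d - 1)^2 ≤ ((N:ℝ)-1)^2 := by nlinarith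
  linarith

lemma N_one_le {d N : ℕ} (hN : (2*d+1) * 9^d ≤ N) : 1 ≤ N :=
  le_trans (Nat.one_le_iff_ne_zero.mpr (by positivity)) hN

lemma delta_le_half {d N : ℕ} (hd : 1 ≤ d) (hN : (2*d+1) * 9^d ≤ N) {j : ℕ} (hj : N ≤ j) :
    delta d j ≤ 1/2 := by
  have h1 := N_sq_large hd hN
  have hN1 : 1 ≤ N := N_one_le hN
  have hNr : (1:ℝ) ≤ (N:ℝ) := by exact_mod_cast hN1
  have hjr : (N:ℝ) ≤ (j:ℝ) := by exact_mod_cast hj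
  have hNj : ((N:ℝ) - 1)^2 ≤ (j:ℝ)^2 := by nlinarith
  have hj0 : (0:ℝ) < (j:ℝ)^2 := by nlinarith
  unfold delta
  rw [div_le_iff₀ hj0]
  nlinarith

lemma delta_nonneg (d j : ℕ) : 0 ≤ delta d j := by
  unfold delta
  positivity


lemma exp_neg_two_le {x : ℝ} (h0 : 0 ≤ x) (h2 : x ≤ 1/2) : Real.exp (-(2*x)) ≤ 1 - x := by
  have h1 := Real.add_one_le_exp (2*x)
  have h3 : Real.exp (-(2*x)) = (Real.exp (2*x))⁻¹ := Real.exp_neg _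
  have h4 : (0:ℝ) < Real.exp (2*x) := Real.exp_pos _
  rw [h3, inv_le_iff_one_le_mul₀ h4]
  nlinarith

lemma Cconst_prod_lower {d N : ℕ} (hd : 1 ≤ d) (hN : (2*d+1) * 9^d ≤ N) (hN2 : 27 ≤ N) :
    ∀ m, N - 1 ≤ m →
      Real.exp (-(16 * (((9:ℝ)^d + 1) * Real.sqrt d) * (1/(((N:ℝ))-1) - 1/(m:ℝ))))
        ≤ ∏ j ∈ Finset.Ioc (N-1) m, (1 - delta d j) := by
  have hn0 : ((N - 1 : ℕ):ℝ) = (N:ℝ) - 1 := by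
    rw [Nat.cast_sub (by omega)]; norm_num
  intro m hm
  induction m, hm using Nat.le_induction with
  | base =>
    rw [Finset.Ioc_self, Finset.prod_empty, ← hn0, sub_self, mul_zero, neg_zero, Real.exp_zero]
  | succ m hm ih =>
    rw [Finset.prod_Ioc_succ_top (by omega)]
    have hm26 : 26 ≤ m := by omega
    have hmr : (26:ℝ) ≤ (m:ℝ) := by exact_mod_cast hm26
    set L := ((9:ℝ)^d + 1) * Real.sqrt d with hL
    have hL0 : 0 ≤ L := by rw [hL]; positivity
    have hδ : delta d (m+1) ≤ 1/2 := delta_le_half hd hN (by omega)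
    have hδ0 : 0 ≤ delta d (m+1) := delta_nonneg _ _
    have hfac : Real.exp (-(2 * delta d (m+1))) ≤ 1 - delta d (m+1) :=
      exp_neg_two_le hδ0 hδ
    have hkey : -(16 * L * (1/((N:ℝ)-1) - 1/(((m+1:ℕ)):ℝ)))
        ≤ -(16 * L * (1/((N:ℝ)-1) - 1/((m:ℕ):ℝ))) + (-(2 * delta d (m+1))) := by
      have hc : ((m+1:ℕ):ℝ) = (m:ℝ) + 1 := by push_cast; ring
      rw [hc]
      have h2δ : 2 * delta d (m+1) = 16 * L / ((m:ℝ)+1)^2 := by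
        unfold delta
        rw [← hL, hc]
        ring
      have hfrac : 16 * L / ((m:ℝ)+1)^2 ≤ 16 * L * (1/(m:ℝ) - 1/((m:ℝ)+1)) := by
        have h1 : 1/(m:ℝ) - 1/((m:ℝ)+1) = 1/((m:ℝ)*((m:ℝ)+1)) := by
          field_simp
          ring
        rw [h1, mul_one_div]
        apply div_le_div_of_nonneg_left (by positivity) (by positivity)
        nlinarith
      rw [h2δ]
      nlinarith [hfrac]
    calc Real.exp (-(16 * L * (1/((N:ℝ)-1) - 1/(((m+1:ℕ)):ℝ))))
        ≤ Real.exp (-(16 * L * (1/((N:ℝ)-1) - 1/((m:ℕ):ℝ))) + (-(2 * delta d (m+1)))) :=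
          Real.exp_le_exp.mpr hkey
      _ = Real.exp (-(16 * L * (1/((N:ℝ)-1) - 1/((m:ℕ):ℝ)))) * Real.exp (-(2 * delta d (m+1))) :=
          Real.exp_add _ _
      _ ≤ (∏ j ∈ Finset.Ioc (N-1) m, (1 - delta d j)) * (1 - delta d (m+1)) := by
          apply mul_le_mul ih hfac (Real.exp_pos _).le
          exact le_trans (Real.exp_pos _).le ih

/-- uniform positive lower bound for the rate constants. -/
def Cstar (d K N : ℕ) : ℝ :=
  (100 / Kn K (N-2)) * Real.exp (-(16 * (((9:ℝ)^d + 1) * Real.sqrt d) / ((N:ℝ)-1)))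

lemma Cstar_pos {d K N : ℕ} (hK2 : 2 ≤ K) (hN2 : 27 ≤ N) : 0 < Cstar d K N := by
  unfold Cstar
  have := Kn_pos hK2 (N-2)
  positivity

lemma Cconst_ge_Cstar {d K N : ℕ} (hd : 1 ≤ d) (hK2 : 2 ≤ K)
    (hN : (2*d+1) * 9^d ≤ N) (hN2 : 27 ≤ N) {m : ℕ} (hm : N - 1 ≤ m) :
    Cstar d K N ≤ Cconst d K (N-1) m := by
  have h1 := Cconst_prod_lower hd hN hN2 m hm
  have hκ := Kn_pos hK2 ((N-1) - 1)
  have hNN : (N-1) - 1 = N - 2 := by omega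
  have hm0 : (0:ℝ) < (m:ℝ) := by
    have : 26 ≤ m := by omega
    have : (26:ℝ) ≤ (m:ℝ) := by exact_mod_cast this
    linarith
  have hN1 : (0:ℝ) < (N:ℝ) - 1 := by
    have : (27:ℝ) ≤ (N:ℝ) := by exact_mod_cast hN2
    linarith
  set L := ((9:ℝ)^d + 1) * Real.sqrt d with hL
  have hL0 : 0 ≤ L := by rw [hL]; positivity
  have h2 : Real.exp (-(16 * L / ((N:ℝ)-1)))
      ≤ Real.exp (-(16 * L * (1/((N:ℝ)-1) - 1/(m:ℝ)))) := by
    apply Real.exp_le_exp.mpr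
    have h3 : (0:ℝ) < 1/(m:ℝ) := by positivity
    have h4 : 16 * L * (1/((N:ℝ)-1) - 1/(m:ℝ)) ≤ 16 * L * (1/((N:ℝ)-1)) := by nlinarith
    have h5 : 16 * L / ((N:ℝ)-1) = 16 * L * (1/((N:ℝ)-1)) := by ring
    linarith
  unfold Cstar Cconst
  rw [hNN]
  have hpos : (0:ℝ) < 100 / Kn K (N-2) := by
    have := Kn_pos hK2 (N-2); positivity
  apply mul_le_mul_of_nonneg_left _ hpos.le
  exact h2.trans h1

/-- Edge-length bound gives the base rate. -/
lemma edgeRate {c : ℝ} (hc : 0 ≤ c) (ℓ : ℕ) (f : ℕ → Fin d → ℝ)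
    (hedges : ∀ t < ℓ, euclid (f t) (f (t+1)) ≤ c) :
    euclid (f 0) (f ℓ) ≤ ℓ * c := by
  rcases le_or_gt (euclid (f 0) (f ℓ)) 0 with h | h
  · have : (0:ℝ) ≤ ℓ * c := by positivity
    linarith
  · obtain ⟨e, he, hphiD⟩ := exists_unit_dir h
    rw [← hphiD]
    have htel : phi e (f ℓ) - phi e (f 0)
        = ∑ t ∈ Finset.range ℓ, (phi e (f (t+1)) - phi e (f t)) := by
      rw [Finset.sum_range_sub (f := fun t => phi e (f t))]
    rw [htel]
    calc ∑ t ∈ Finset.range ℓ, (phi e (f (t+1)) - phi e (f t))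
        ≤ ∑ _t ∈ Finset.range ℓ, c := by
          apply Finset.sum_le_sum
          intro t ht
          have h1 := phi_sub_le he (f (t+1)) (f t)
          rw [euclid_comm] at h1
          exact h1.trans (hedges t (Finset.mem_range.mp ht))
      _ = ℓ * c := by rw [Finset.sum_const, Finset.card_range, nsmul_eq_mul]

/-- The main multiscale induction. -/
lemma Pmain {d K N : ℕ} (hd : 1 ≤ d) (hK2 : 2 ≤ K)
    (hN : (2*d+1) * 9^d ≤ N) (hN2 : 27 ≤ N)
    {A : (Fin d → ℝ) → (Fin d → ℝ) → Prop} :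
    ∀ m, N - 1 ≤ m → ∀ x : Fin d → ℝ, IsGood A K m x →
    ∀ (ℓ : ℕ) (f : ℕ → Fin d → ℝ), (∀ t ≤ ℓ, f t ∈ box x (Kn K m)) →
      (∀ t < ℓ, A (f t) (f (t+1))) →
      Kn K m / 8 ≤ euclid (f 0) (f ℓ) →
      Cconst d K (N-1) m * euclid (f 0) (f ℓ) ≤ ℓ := by
  intro m hm
  induction m, hm using Nat.le_induction with
  | base =>
    intro x hGood ℓ f hmem hadj _hth
    have hκ := Kn_pos hK2 (N-2)
    have hEdge : ∀ t < ℓ, euclid (f t) (f (t+1)) ≤ Kn K (N-2) / 100 := by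
      have h1 : N - 1 = (N-2) + 1 := by omega
      rw [h1] at hGood
      have h2 := (hGood (fun _ => 0) (fun i => Or.inr (Or.inl rfl))).1
      have hbx : (box (fun i => x i + (Kn K (N-2) / 2) * (0:ℝ)) (Kn K ((N-2)+1)))
          = box x (Kn K (N-1)) := by
        rw [← h1]
        congr 1
        funext i
        ring
      rw [hbx] at h2
      intro t ht
      exact h2 _ _ (hadj t ht) (hmem t ht.le) (hmem (t+1) ht)
    have hD := edgeRate (by positivity) ℓ f hEdge
    have hCb : Cconst d K (N-1) (N-1) = 100 / Kn K (N-2) := by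
      unfold Cconst
      rw [Finset.Ioc_self, Finset.prod_empty, mul_one]
      have h2 : N - 1 - 1 = N - 2 := by omega
      rw [h2]
    rw [hCb]
    rw [div_mul_eq_mul_div, div_le_iff₀ hκ]
    calc 100 * euclid (f 0) (f ℓ) ≤ 100 * (ℓ * (Kn K (N-2)/100)) := by linarith
      _ = ℓ * Kn K (N-2) := by ring
  | succ m hm ih =>
    intro x hGood ℓ f hmem hadj hth
    have hCm0 : 0 < Cconst d K (N-1) m :=
      lt_of_lt_of_le (Cstar_pos hK2 hN2) (Cconst_ge_Cstar hd hK2 hN hN2 hm)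
    have hstep := step hK2 m x hGood (C := Cconst d K (N-1) m) hCm0.le
      (fun y hy t g h1 h2 h3 => ih y hy t g h1 h2 h3) ℓ f hmem hadj
    set D := euclid (f 0) (f ℓ) with hD
    set L := ((9:ℝ)^d + 1) * Real.sqrt d with hL
    have hL0 : 0 ≤ L := by rw [hL]; positivity
    have hKm := Kn_pos hK2 m
    have hδ : delta d (m+1) ≤ 1/2 := delta_le_half hd hN (by omega)
    have hδ0 : 0 ≤ delta d (m+1) := delta_nonneg _ _
    have hm1r : ((m+1:ℕ):ℝ) = (m:ℝ)+1 := by push_cast; ring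
    have hKsucc : Kn K (m+1) = ((m:ℝ)+1)^2 * Kn K m := Kn_succ K m
    have hloss : L * Kn K m ≤ delta d (m+1) * D := by
      have h1 : delta d (m+1) = 8 * L / ((m:ℝ)+1)^2 := by
        unfold delta
        rw [← hL, hm1r]
      have h2 : Kn K (m+1)/8 ≤ D := hth
      have h3 : (0:ℝ) < ((m:ℝ)+1)^2 := by positivity
      rw [h1]
      rw [div_mul_eq_mul_div, le_div_iff₀ h3]
      calc L * Kn K m * ((m:ℝ)+1)^2 = 8 * L * (((m:ℝ)+1)^2 * Kn K m / 8) := by ring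
        _ ≤ 8 * L * D := by
            apply mul_le_mul_of_nonneg_left _ (by linarith)
            rw [← hKsucc]
            exact h2
    have hD0 : 0 ≤ D := euclid_nonneg _ _
    have hCsucc : Cconst d K (N-1) (m+1) = Cconst d K (N-1) m * (1 - delta d (m+1)) := by
      unfold Cconst
      rw [Finset.prod_Ioc_succ_top (by omega)]
      ring
    rw [hCsucc]
    calc Cconst d K (N-1) m * (1 - delta d (m+1)) * D
        ≤ Cconst d K (N-1) m * (D - L * Kn K m) := by
          have h4 : (1 - delta d (m+1)) * D ≤ D - L * Kn K m := by nlinarith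
          have := mul_le_mul_of_nonneg_left h4 hCm0.le
          linarith [this]
      _ ≤ ℓ := by
          have : L * Kn K m = ((9:ℝ)^d + 1) * Real.sqrt d * Kn K m := by rw [hL]
          rw [← this] at hstep
          exact hstep


/-- edge bound inside a good box. -/
lemma good_edge_bound {K : ℕ} {A : (Fin d → ℝ) → (Fin d → ℝ) → Prop} (s : ℕ)
    (x : Fin d → ℝ) (hGood : IsGood A K (s+1) x) :
    ∀ p q, A p q → p ∈ box x (Kn K (s+1)) → q ∈ box x (Kn K (s+1)) →
      euclid p q ≤ Kn K s / 100 := by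
  intro p q hpq hp hq
  have h0 := (hGood (fun _ => 0) (fun i => Or.inr (Or.inl rfl))).1
  have hbx : (box (fun i => x i + (Kn K s / 2) * (0:ℝ)) (Kn K (s+1))) = box x (Kn K (s+1)) := by
    congr 1
    funext i
    ring
  rw [hbx] at h0
  exact h0 p q hpq hp hq

theorem main_theorem
    (d K N : ℕ) (hd : 1 ≤ d) (hK : Even K) (hK2 : 2 ≤ K) (hN : (2*d+1) * 9^d ≤ N) :
    ∃ C₁ : ℝ, 0 < C₁ ∧
      ∀ (G : SimpleGraph (Fin d → ℝ)) (n : ℕ), N ≤ n →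
      ∀ u w : Fin d → ℝ, w ∈ box u (Kn K n) → Kn K (n-1) / 8 < euclid u w →
      IsGood G.Adj K n u → IsGood G.Adj K (n-1) u →
      ∀ (ℓ : ℕ) (f : ℕ → (Fin d → ℝ)), IsPathRel G.Adj u w ℓ f →
        (∀ i ≤ ℓ, f i ∈ box u (Kn K n)) →
        C₁ * euclid u w ≤ (ℓ : ℝ) := by
  classical
  have hN2 : 27 ≤ N := by
    refine le_trans ?_ hN
    have h1 : 3 ≤ 2*d+1 := by omega
    have h2 : 9 ≤ 9^d := by
      calc 9 = 9^1 := (pow_one 9).symm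
        _ ≤ 9^d := Nat.pow_le_pow_right (by norm_num) hd
    calc 27 = 3 * 9 := by norm_num
      _ ≤ (2*d+1) * 9^d := Nat.mul_le_mul h1 h2
  have hsd1 : (1:ℝ) ≤ Real.sqrt d := by
    rw [show (1:ℝ) = Real.sqrt 1 from Real.sqrt_one.symm]
    apply Real.sqrt_le_sqrt
    exact_mod_cast hd
  have h9d : (1:ℝ) ≤ (9:ℝ)^d := one_le_pow₀ (by norm_num)
  have hden : (1:ℝ) ≤ 5 * Real.sqrt d * ((9:ℝ)^d + 1) := by nlinarith
  have hCstar := Cstar_pos (d := d) hK2 hN2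
  refine ⟨Cstar d K N / (5 * Real.sqrt d * ((9:ℝ)^d + 1)), by positivity, ?_⟩
  intro G n hn u w hw hdist hGn hGn1 ℓ f hpath hmem
  set C₁ := Cstar d K N / (5 * Real.sqrt d * ((9:ℝ)^d + 1)) with hC₁
  have hC₁pos : 0 < C₁ := by rw [hC₁]; positivity
  have hC₁_le : C₁ ≤ Cstar d K N := by
    rw [hC₁]
    rw [div_le_iff₀ (by positivity)]
    nlinarith
  obtain ⟨hf0, hfl, hadj⟩ := hpath
  rw [← hf0, ← hfl] at hdist ⊢
  set D := euclid (f 0) (f ℓ) with hDdef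
  have hD0 : 0 ≤ D := euclid_nonneg _ _
  rw [← hf0] at hmem hGn hGn1
  have hn1 : N - 1 ≤ n := by omega
  have hn1' : N - 1 ≤ n - 1 := by omega
  have hsn : n - 1 + 1 = n := by omega
  have hη := Kn_pos hK2 (n-1)
  set η := Kn K (n-1) with hηdef
  -- the rate constants at scales n and n-1 dominate C₁
  have hCn : Cstar d K N ≤ Cconst d K (N-1) n := Cconst_ge_Cstar hd hK2 hN hN2 hn1
  have hCn1 : Cstar d K N ≤ Cconst d K (N-1) (n-1) := Cconst_ge_Cstar hd hK2 hN hN2 hn1'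
  have hCn1pos : 0 < Cconst d K (N-1) (n-1) := lt_of_lt_of_le hCstar hCn1
  rcases le_or_gt (Kn K n / 8) D with hcase1 | hcase1
  · -- large displacement: full crossing estimate at scale n
    have hP := Pmain hd hK2 hN hN2 n hn1 (f 0) hGn ℓ f hmem hadj hcase1
    calc C₁ * D ≤ Cconst d K (N-1) n * D := by
          apply mul_le_mul_of_nonneg_right _ hD0
          exact hC₁_le.trans hCn
      _ ≤ ℓ := hP
  · rcases le_or_gt (2 * (Real.sqrt d * ((9:ℝ)^d + 1)) * η) D with hcase2 | hcase2
    · -- medium displacement: one step estimate at scale n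
      have hG' : IsGood G.Adj K ((n-1)+1) (f 0) := by rw [hsn]; exact hGn
      have hmem' : ∀ t ≤ ℓ, f t ∈ box (f 0) (Kn K ((n-1)+1)) := by rw [hsn]; exact hmem
      have hstep := step hK2 (n-1) (f 0) hG' hCn1pos.le
        (fun y hy t g h1 h2 h3 => Pmain hd hK2 hN hN2 (n-1) hn1' y hy t g h1 h2 h3)
        ℓ f hmem' hadj
      have hloss : ((9:ℝ)^d + 1) * Real.sqrt d * η ≤ D / 2 := by nlinarith
      have h2 : Cconst d K (N-1) (n-1) * (D/2) ≤ ℓ := by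
        refine le_trans ?_ hstep
        apply mul_le_mul_of_nonneg_left _ hCn1pos.le
        linarith
      have hB2 : (0:ℝ) ≤ 5 * Real.sqrt d * ((9:ℝ)^d + 1) - 2 := by nlinarith
      calc C₁ * D = (C₁ * 2) * (D/2) := by ring
        _ ≤ Cconst d K (N-1) (n-1) * (D/2) := by
            apply mul_le_mul_of_nonneg_right _ (by linarith [hD0])
            have : C₁ * 2 ≤ Cstar d K N := by
              rw [hC₁, div_mul_eq_mul_div, div_le_iff₀ (by positivity)]
              nlinarith [mul_nonneg hCstar.le hB2]
            exact this.trans hCn1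
        _ ≤ ℓ := h2
    · -- small displacement: use goodness of the box at scale n-1 around the start
      by_cases hin : ∀ t ≤ ℓ, f t ∈ box (f 0) η
      · have hP := Pmain hd hK2 hN hN2 (n-1) hn1' (f 0) hGn1 ℓ f hin hadj hdist.le
        calc C₁ * D ≤ Cconst d K (N-1) (n-1) * D := by
              apply mul_le_mul_of_nonneg_right _ hD0
              exact hC₁_le.trans hCn1
          _ ≤ ℓ := hP
      · push_neg at hin
        obtain ⟨T, ⟨hTle, hTout⟩, hminraw⟩ :
            ∃ T, (T ≤ ℓ ∧ f T ∉ box (f 0) η) ∧ ∀ t < T, ¬(t ≤ ℓ ∧ f t ∉ box (f 0) η) := by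
          have hex : ∃ t, t ≤ ℓ ∧ f t ∉ box (f 0) η := hin
          exact ⟨Nat.find hex, Nat.find_spec hex, fun t ht => Nat.find_min hex ht⟩
        have hT1 : 1 ≤ T := by
          rcases Nat.eq_zero_or_pos T with h | h
          · exfalso
            apply hTout
            rw [h]
            intro i
            constructor <;> [linarith; linarith]
          · exact h
        have hmemT : ∀ r ≤ T - 1, f r ∈ box (f 0) η := by
          intro r hr
          by_contra hcon
          exact hminraw r (by omega) ⟨by omega, hcon⟩
        -- the exit coordinate
        obtain ⟨i, hi⟩ : ∃ i, η/2 ≤ |f T i - f 0 i| := by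
          by_contra hcon
          push_neg at hcon
          apply hTout
          intro i
          have := hcon i
          rw [abs_lt] at this
          constructor <;> linarith [this.1, this.2]
        -- edge bound at scale n
        have hedge : euclid (f (T-1)) (f T) ≤ η / 100 := by
          have hGndef : IsGood G.Adj K ((n-1)+1) (f 0) := by rw [hsn]; exact hGn
          have hbig : ∀ t ≤ ℓ, f t ∈ box (f 0) (Kn K ((n-1)+1)) := by rw [hsn]; exact hmem
          have hadjT : G.Adj (f (T-1)) (f T) := by
            have h1 := hadj (T-1) (by omega)
            rwa [show T - 1 + 1 = T from by omega] at h1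
          exact good_edge_bound (n-1) (f 0) hGndef _ _ hadjT
            (hbig _ (by omega)) (hbig _ (by omega))
        have hdispT : η * (49/100) ≤ euclid (f 0) (f (T-1)) := by
          have h1 : |f T i - f (T-1) i| ≤ η/100 := by
            have := coord_le_euclid (f T) (f (T-1)) i
            rw [euclid_comm] at this
            exact this.trans hedge
          have h2 : |f 0 i - f (T-1) i| ≥ η/2 - η/100 := by
            have h3 := abs_sub_le (f T i) (f (T-1) i) (f 0 i)
            have h4 : |f T i - f 0 i| ≤ |f T i - f (T-1) i| + |f (T-1) i - f 0 i| := h3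
            rw [abs_sub_comm (f (T-1) i) (f 0 i)] at h4
            linarith
          calc η * (49/100) = η/2 - η/100 := by ring
            _ ≤ |f 0 i - f (T-1) i| := h2
            _ ≤ euclid (f 0) (f (T-1)) := coord_le_euclid _ _ i
        have hP := Pmain hd hK2 hN hN2 (n-1) hn1' (f 0) hGn1 (T-1) f hmemT
          (fun r hr => hadj r (by omega)) (by linarith)
        have hTℓ : ((T:ℝ) - 1) ≤ (ℓ:ℝ) := by
          have : (T:ℝ) ≤ (ℓ:ℝ) := by exact_mod_cast hTle
          linarith
        have hTcast : ((T - 1 : ℕ):ℝ) = (T:ℝ) - 1 := by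
          rw [Nat.cast_sub hT1]
          norm_num
        rw [hTcast] at hP
        have hbound : Cconst d K (N-1) (n-1) * (η * (49/100)) ≤ ℓ := by
          calc Cconst d K (N-1) (n-1) * (η * (49/100))
              ≤ Cconst d K (N-1) (n-1) * euclid (f 0) (f (T-1)) :=
                mul_le_mul_of_nonneg_left hdispT hCn1pos.le
            _ ≤ (T:ℝ) - 1 := hP
            _ ≤ ℓ := hTℓ
        -- C₁ * D is at most that
        calc C₁ * D ≤ C₁ * (2 * (Real.sqrt d * ((9:ℝ)^d + 1)) * η) := by
              apply mul_le_mul_of_nonneg_left (le_of_lt hcase2) hC₁pos.le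
          _ ≤ Cstar d K N * (η * (49/100)) := by
              have hBne : Real.sqrt d * ((9:ℝ)^d + 1) ≠ 0 := by positivity
              have heq : C₁ * (2 * (Real.sqrt d * ((9:ℝ)^d + 1)) * η)
                  = (2/5) * (Cstar d K N * η) := by
                rw [hC₁]
                field_simp
              rw [heq]
              have hXη : 0 ≤ Cstar d K N * η := mul_nonneg hCstar.le hη.le
              linarith
          _ ≤ Cconst d K (N-1) (n-1) * (η * (49/100)) := by
              apply mul_le_mul_of_nonneg_right hCn1 (by positivity)
          _ ≤ ℓ := hbound

end PathProof

/-- Renormalisation bound (Proposition): if `B_n(u)` and `B_{n-1}(u)` are good,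
`w ∈ B_n(u)` and `|u-w| > K_{n-1}/8`, then every path from `u` to `w` contained in
`B_n(u)` has at least `C₁·|u-w|` edges, where `C₁ > 0` depends only on `d`, `N`, `K`. -/
theorem path_length_good_boxes
    (d K N : ℕ) (hd : 1 ≤ d) (hK : Even K) (hK2 : 2 ≤ K) (hN : (2*d+1) * 9^d ≤ N) :
    ∃ C₁ : ℝ, 0 < C₁ ∧
      ∀ (G : SimpleGraph (Fin d → ℝ)) (n : ℕ), N ≤ n →
      ∀ u w : Fin d → ℝ, w ∈ box u (Kn K n) → Kn K (n-1) / 8 < euclid u w →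
      IsGood G.Adj K n u → IsGood G.Adj K (n-1) u →
      ∀ (ℓ : ℕ) (f : ℕ → (Fin d → ℝ)), IsPathRel G.Adj u w ℓ f →
        (∀ i ≤ ℓ, f i ∈ box u (Kn K n)) →
        C₁ * euclid u w ≤ (ℓ : ℝ) :=
  PathProof.main_theorem d K N hd hK hK2 hN
end
end

section
/- Fix integers d ≥ 1 and an even K ≥ 2. There exists a constant η > 0, depending only on d and K, such that for every L ∈ ℕ there is m₀ ∈ ℕ with the following property for all m ≥ m₀ and every simple graph G whose vertex set is a set of points of ℝ^d: let n = n_K(m) be the largest integer with K(n!)² ≤ m; if the box B_k(o) is good for every k ≥ n − 1, then for every vertex u of G with u ∈ Λ_L(o) and every vertex w of G with w ∉ Λ_m(o), every path in G from u to w has at least η·|u − w| edges. -/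
noncomputable section
open MeasureTheory ProbabilityTheory Filter

/-- `n_K(m)`: the largest `n` with `K·(n!)² ≤ m` (for `K ≥ 1` and `m ≥ K`). -/
def nK (K m : ℕ) : ℕ := Nat.findGreatest (fun n => K * (Nat.factorial n)^2 ≤ m) m


namespace GB

variable {d : ℕ}

lemma euclid_eq_dist (x y : Fin d → ℝ) :
    euclid x y = dist ((WithLp.equiv 2 (Fin d → ℝ)).symm x) ((WithLp.equiv 2 (Fin d → ℝ)).symm y) := by
  rw [EuclideanSpace.dist_eq]
  unfold euclid
  congr 1
  refine Finset.sum_congr rfl (fun i _ => ?_)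
  rw [Real.dist_eq, sq_abs]
  rfl

lemma euclid_self (x : Fin d → ℝ) : euclid x x = 0 := by
  rw [euclid_eq_dist]; simp

lemma euclid_nonneg (x y : Fin d → ℝ) : 0 ≤ euclid x y := Real.sqrt_nonneg _

lemma euclid_comm (x y : Fin d → ℝ) : euclid x y = euclid y x := by
  rw [euclid_eq_dist, euclid_eq_dist, dist_comm]

lemma euclid_triangle (x y z : Fin d → ℝ) : euclid x z ≤ euclid x y + euclid y z := by
  rw [euclid_eq_dist, euclid_eq_dist, euclid_eq_dist]
  exact dist_triangle _ _ _

lemma coord_le_euclid (x y : Fin d → ℝ) (i : Fin d) : |x i - y i| ≤ euclid x y := by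
  unfold euclid
  rw [← Real.sqrt_sq_eq_abs]
  exact Real.sqrt_le_sqrt (Finset.single_le_sum (f := fun i => (x i - y i)^2)
    (fun j _ => sq_nonneg _) (Finset.mem_univ i))

lemma euclid_le_of_coords {x y : Fin d → ℝ} {c : ℝ} (hc : 0 ≤ c)
    (h : ∀ i, |x i - y i| ≤ c) : euclid x y ≤ Real.sqrt d * c := by
  unfold euclid
  have hsum : ∑ i, (x i - y i)^2 ≤ (d : ℝ) * c^2 := by
    calc ∑ i, (x i - y i)^2 ≤ ∑ _i : Fin d, c^2 := by
          refine Finset.sum_le_sum (fun i _ => ?_)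
          have h1 := h i
          nlinarith [abs_nonneg (x i - y i), sq_abs (x i - y i)]
      _ = (d : ℝ) * c^2 := by simp [Finset.card_univ]
  calc Real.sqrt (∑ i, (x i - y i)^2) ≤ Real.sqrt ((d:ℝ) * c^2) := Real.sqrt_le_sqrt hsum
    _ = Real.sqrt d * c := by
        rw [Real.sqrt_mul (by positivity), Real.sqrt_sq hc]

lemma euclid_chain (f : ℕ → Fin d → ℝ) : ∀ T : ℕ,
    euclid (f 0) (f T) ≤ ∑ t ∈ Finset.range T, euclid (f t) (f (t+1)) := by
  intro T
  induction T with
  | zero => simp [euclid_self]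
  | succ T ih =>
      calc euclid (f 0) (f (T+1)) ≤ euclid (f 0) (f T) + euclid (f T) (f (T+1)) :=
            euclid_triangle _ _ _
        _ ≤ (∑ t ∈ Finset.range T, euclid (f t) (f (t+1))) + euclid (f T) (f (T+1)) := by
            linarith
        _ = ∑ t ∈ Finset.range (T+1), euclid (f t) (f (t+1)) := by
            rw [Finset.sum_range_succ]

lemma box_mono {c : Fin d → ℝ} {r r' : ℝ} (h : r ≤ r') : box c r ⊆ box c r' := by
  intro p hp i
  obtain ⟨h1, h2⟩ := hp i
  constructor <;> nlinarith

lemma Kn_pos {K : ℕ} (hK : 1 ≤ K) (n : ℕ) : 0 < Kn K n := by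
  unfold Kn
  have h1 : 0 < (K:ℝ) := by exact_mod_cast hK
  have h2 : 0 < (Nat.factorial n : ℝ) := by exact_mod_cast Nat.factorial_pos n
  positivity

lemma Kn_succ (K n : ℕ) : Kn K (n+1) = ((n:ℝ)+1)^2 * Kn K n := by
  unfold Kn
  rw [Nat.factorial_succ]
  push_cast
  ring

lemma Kn_le_succ {K : ℕ} (hK : 1 ≤ K) (n : ℕ) : Kn K n ≤ Kn K (n+1) := by
  rw [Kn_succ]
  have h1 : (1:ℝ) ≤ ((n:ℝ)+1)^2 := by nlinarith [Nat.cast_nonneg (α := ℝ) n]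
  nlinarith [Kn_pos hK n]

lemma Kn_mono {K : ℕ} (hK : 1 ≤ K) {a b : ℕ} (h : a ≤ b) : Kn K a ≤ Kn K b := by
  induction b with
  | zero => simp_all
  | succ b ih =>
      rcases Nat.lt_or_ge a (b+1) with h1 | h1
      · exact le_trans (ih (by omega)) (Kn_le_succ hK b)
      · have : a = b + 1 := by omega
        subst this; rfl

lemma two_Kn_le {K : ℕ} (hK : 1 ≤ K) {n : ℕ} (hn : 1 ≤ n) :
    2 * Kn K n ≤ Kn K (n+1) := by
  rw [Kn_succ]
  have h1 : (0:ℝ) < Kn K n := Kn_pos hK n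
  have h2 : (1:ℝ) ≤ (n:ℝ) := by exact_mod_cast hn
  have h3 : (4:ℝ) ≤ ((n:ℝ)+1)^2 := by nlinarith
  nlinarith

lemma nat_le_Kn {K : ℕ} (hK : 1 ≤ K) (n : ℕ) : (n : ℝ) ≤ Kn K n := by
  unfold Kn
  have h1 : (1:ℝ) ≤ (K:ℝ) := by exact_mod_cast hK
  have h2 : (n : ℝ) ≤ (Nat.factorial n : ℝ) := by exact_mod_cast Nat.self_le_factorial n
  have h3 : (1:ℝ) ≤ (Nat.factorial n : ℝ) := by exact_mod_cast Nat.one_le_iff_ne_zero.mpr (Nat.factorial_ne_zero n)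
  nlinarith


/-- base scale -/
def s0 (d : ℕ) : ℕ := 100 * 9^d * d + 2

/-- constant `9^d √d` -/
def D9 (d : ℕ) : ℝ := (9:ℝ)^d * Real.sqrt d

/-- additive budget at scale `s` -/
def Abud (d K : ℕ) (s : ℕ) : ℝ := D9 d * ∑ r ∈ Finset.Ico (s0 d) s, Kn K (r-1)

/-- relative inflation at scale `s` -/
def eps (d K : ℕ) (s : ℕ) : ℝ := Abud d K s / (Kn K (s-1)/9 - Abud d K s)

/-- per-edge rate at scale `s` -/
def rho (d K : ℕ) (s : ℕ) : ℝ :=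
  (Kn K (s0 d - 1)/100) * ∏ r ∈ Finset.Ioc (s0 d) s, (1 + eps d K r)

lemma s0_ge_two (d : ℕ) : 2 ≤ s0 d := by unfold s0; omega

lemma D9_pos {d : ℕ} (hd : 1 ≤ d) : 0 < D9 d := by
  unfold D9
  have : (0:ℝ) < Real.sqrt d := Real.sqrt_pos.mpr (by exact_mod_cast hd)
  positivity

lemma one_le_D9 {d : ℕ} (hd : 1 ≤ d) : 1 ≤ D9 d := by
  unfold D9
  have h1 : (1:ℝ) ≤ (9:ℝ)^d := one_le_pow₀ (by norm_num)
  have h2 : (1:ℝ) ≤ Real.sqrt d := by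
    rw [show (1:ℝ) = Real.sqrt 1 by simp]
    exact Real.sqrt_le_sqrt (by exact_mod_cast hd)
  nlinarith

lemma sqrt_le_D9 {d : ℕ} (hd : 1 ≤ d) : Real.sqrt d ≤ D9 d := by
  unfold D9
  have h1 : (1:ℝ) ≤ (9:ℝ)^d := one_le_pow₀ (by norm_num)
  nlinarith [Real.sqrt_nonneg (d:ℝ)]

lemma D9_le {d : ℕ} (hd : 1 ≤ d) : D9 d ≤ (9:ℝ)^d * d := by
  unfold D9
  have hd1 : (1:ℝ) ≤ (d:ℝ) := by exact_mod_cast hd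
  have h2 : Real.sqrt d ≤ (d:ℝ) := by
    have h3 : Real.sqrt d ≤ Real.sqrt ((d:ℝ)^2) := Real.sqrt_le_sqrt (by nlinarith)
    rwa [Real.sqrt_sq (by positivity)] at h3
  have h1 : (0:ℝ) < (9:ℝ)^d := by positivity
  nlinarith

lemma Abud_nonneg {d K : ℕ} (hK : 1 ≤ K) (s : ℕ) : 0 ≤ Abud d K s := by
  unfold Abud D9
  have h1 : 0 ≤ ∑ r ∈ Finset.Ico (s0 d) s, Kn K (r-1) :=
    Finset.sum_nonneg (fun r _ => le_of_lt (Kn_pos hK _))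
  have h2 : (0:ℝ) ≤ Real.sqrt d := Real.sqrt_nonneg _
  positivity

lemma Abud_le {d K : ℕ} (hd : 1 ≤ d) (hK : 1 ≤ K) :
    ∀ s : ℕ, s0 d ≤ s → Abud d K (s+1) ≤ 2 * D9 d * Kn K (s-1) := by
  intro s hs
  induction s, hs using Nat.le_induction with
  | base =>
      unfold Abud
      rw [Finset.sum_Ico_succ_top (show s0 d ≤ s0 d from le_refl _), Finset.Ico_self, Finset.sum_empty]
      have := Kn_pos hK (s0 d - 1); nlinarith [D9_pos hd]
  | succ s hs ih =>
      have hrec : Abud d K (s+1+1) = Abud d K (s+1) + D9 d * Kn K s := by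
        unfold Abud
        rw [Finset.sum_Ico_succ_top (show s0 d ≤ s + 1 by omega)]
        have : (s + 1) - 1 = s := by omega
        rw [this]; ring
      have hs2 : 2 ≤ s0 d := s0_ge_two d
      have h2 : 2 * Kn K (s-1) ≤ Kn K s := by
        have h3 := two_Kn_le hK (n := s-1) (by omega)
        have h4 : (s-1)+1 = s := by omega
        rwa [h4] at h3
      have h5 : (s+1)-1 = s := by omega
      rw [hrec, h5]
      have hD := D9_pos hd
      nlinarith [ih]


section
variable {d K : ℕ}

lemma Abud_succ {n : ℕ} (hn : s0 d ≤ n) :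
    Abud d K (n+1) = Abud d K n + D9 d * Kn K (n-1) := by
  unfold Abud
  rw [Finset.sum_Ico_succ_top (show s0 d ≤ n from hn)]
  ring

lemma s0_cast (d : ℕ) : ((s0 d : ℕ) : ℝ) = 100 * 9^d * (d:ℝ) + 2 := by
  unfold s0; push_cast; ring

lemma forty_D9_le_sq (hd : 1 ≤ d) : 40 * D9 d ≤ ((s0 d : ℝ))^2 := by
  have h1 := D9_le hd
  have h2 : (1:ℝ) ≤ (9:ℝ)^d := one_le_pow₀ (by norm_num)
  have h3 : (1:ℝ) ≤ (d:ℝ) := by exact_mod_cast hd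
  have h4 : (1:ℝ) ≤ (9:ℝ)^d * d := by nlinarith
  rw [s0_cast]
  nlinarith [sq_nonneg ((9:ℝ)^d * (d:ℝ))]

lemma cast_pred_add_one {n : ℕ} (hn : 1 ≤ n) : ((n - 1 : ℕ) : ℝ) + 1 = (n:ℝ) := by
  rw [Nat.cast_sub hn]; push_cast; ring

lemma Kn_pred {n : ℕ} (hn : 1 ≤ n) : Kn K n = (n:ℝ)^2 * Kn K (n-1) := by
  have h3 := Kn_succ K (n-1)
  have h4 : (n-1)+1 = n := by omega
  rw [h4] at h3
  rw [h3, cast_pred_add_one hn]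

lemma Abud_small (hd : 1 ≤ d) (hK : 1 ≤ K) {n : ℕ} (hn : s0 d ≤ n) :
    Abud d K (n+1) ≤ Kn K n / 20 := by
  have h1 := Abud_le hd hK n hn
  have h2 := Kn_pred (K := K) (n := n) (by have := s0_ge_two d; omega)
  have h5 : ((s0 d : ℝ)) ≤ (n:ℝ) := by exact_mod_cast hn
  have h6 := forty_D9_le_sq hd
  have h7 : (0:ℝ) ≤ (s0 d : ℝ) := by positivity
  have h8 : ((s0 d:ℝ))^2 ≤ (n:ℝ)^2 := by nlinarith
  have h9 : 0 < Kn K (n-1) := Kn_pos hK _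
  nlinarith [D9_pos hd]

lemma eps_denom_pos (hd : 1 ≤ d) (hK : 1 ≤ K) {n : ℕ} (hn : s0 d ≤ n) :
    0 < Kn K n / 9 - Abud d K (n+1) := by
  have h1 := Abud_small hd hK (K := K) hn
  have h2 := Kn_pos hK n
  nlinarith

lemma eps_succ_eq {n : ℕ} : eps d K (n+1) = Abud d K (n+1) / (Kn K n / 9 - Abud d K (n+1)) := by
  unfold eps; norm_num

lemma eps_nonneg (hd : 1 ≤ d) (hK : 1 ≤ K) {n : ℕ} (hn : s0 d ≤ n) :
    0 ≤ eps d K (n+1) := by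
  rw [eps_succ_eq]
  exact div_nonneg (Abud_nonneg hK _) (le_of_lt (eps_denom_pos hd hK hn))

lemma eps_nonneg_mem (hd : 1 ≤ d) (hK : 1 ≤ K) {r S : ℕ} (hr : r ∈ Finset.Ioc (s0 d) S) :
    0 ≤ eps d K r := by
  rw [Finset.mem_Ioc] at hr
  have h1 : (r - 1) + 1 = r := by omega
  have h2 : s0 d ≤ r - 1 := by omega
  rw [← h1]
  exact eps_nonneg hd hK h2

lemma eps_le (hd : 1 ≤ d) (hK : 1 ≤ K) {n : ℕ} (hn : s0 d ≤ n) :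
    eps d K (n+1) ≤ 34 * D9 d / (n:ℝ)^2 := by
  have hnpos : (0:ℝ) < (n:ℝ) := by
    have := s0_ge_two d; exact_mod_cast (by omega : 0 < n)
  rw [eps_succ_eq, div_le_div_iff₀ (eps_denom_pos hd hK hn) (by positivity)]
  have hA := Abud_le hd hK n hn
  have hAsmall := Abud_small hd hK (K := K) (n := n) hn
  have hA0 := Abud_nonneg (d := d) hK (n+1)
  have hKe := Kn_pred (K := K) (n := n) (by have := s0_ge_two d; omega)
  have h9 : 0 < Kn K (n-1) := Kn_pos hK _
  have hD := D9_pos hd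
  nlinarith [mul_le_mul_of_nonneg_right hA (sq_nonneg (n:ℝ)), Kn_pos hK n]

lemma one_div_sq_telescope {x : ℝ} (hx : 2 ≤ x) : 1/x^2 ≤ 1/(x-1) - 1/x := by
  have h1 : 0 < x := by linarith
  have h2 : 0 < x - 1 := by linarith
  rw [div_sub_div _ _ (ne_of_gt h2) (ne_of_gt h1)]
  rw [div_le_div_iff₀ (by positivity) (by positivity)]
  ring_nf
  nlinarith

lemma sum_eps_le (hd : 1 ≤ d) (hK : 1 ≤ K) (S : ℕ) :
    ∑ r ∈ Finset.Ioc (s0 d) S, eps d K r ≤ 1/2 := by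
  have hD := D9_pos hd
  have hs2 := s0_ge_two d
  have hs0r : (2:ℝ) ≤ (s0 d : ℝ) := by exact_mod_cast hs2
  -- telescoping bound
  have key : ∀ t : ℕ, ∑ r ∈ Finset.Ioc (s0 d) (s0 d + t), eps d K r ≤
      34 * D9 d * (1/((s0 d:ℝ) - 1) - 1/((s0 d:ℝ) + t - 1)) := by
    intro t
    induction t with
    | zero => simp
    | succ t ih =>
        have hstep : eps d K (s0 d + t + 1) ≤ 34 * D9 d / ((s0 d:ℝ) + t)^2 := by
          have := eps_le hd hK (K := K) (n := s0 d + t) (by omega)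
          convert this using 3
          push_cast; ring
        have htel : 1/((s0 d:ℝ) + t)^2 ≤ 1/((s0 d:ℝ) + t - 1) - 1/((s0 d:ℝ) + t) := by
          apply one_div_sq_telescope
          have : (0:ℝ) ≤ (t:ℝ) := by positivity
          linarith
        have harrange : s0 d + (t+1) = (s0 d + t) + 1 := by omega
        rw [harrange, Finset.sum_Ioc_succ_top (by omega)]
        have harr : (s0 d:ℝ) + (t+1        :ℕ) - 1 = (s0 d:ℝ) + t := by push_cast; ring
        calc (∑ r ∈ Finset.Ioc (s0 d) (s0 d + t), eps d K r) + eps d K (s0 d + t + 1)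
            ≤ 34 * D9 d * (1/((s0 d:ℝ) - 1) - 1/((s0 d:ℝ) + t - 1))
              + 34 * D9 d / ((s0 d:ℝ) + t)^2 := by linarith
          _ ≤ 34 * D9 d * (1/((s0 d:ℝ) - 1) - 1/((s0 d:ℝ) + t - 1))
              + 34 * D9 d * (1/((s0 d:ℝ) + t - 1) - 1/((s0 d:ℝ) + t)) := by
                rw [div_eq_mul_one_div (34 * D9 d)]
                nlinarith [htel]
          _ = 34 * D9 d * (1/((s0 d:ℝ) - 1) - 1/((s0 d:ℝ) + t)) := by ring
          _ = 34 * D9 d * (1/((s0 d:ℝ) - 1) - 1/((s0 d:ℝ) + ((t+1:ℕ):ℝ) - 1)) := by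
                push_cast; ring_nf
    -- end induction
  rcases le_or_gt S (s0 d) with hS | hS
  · rw [Finset.Ioc_eq_empty_of_le hS, Finset.sum_empty]; norm_num
  · obtain ⟨t, rfl⟩ : ∃ t, S = s0 d + t := ⟨S - s0 d, by omega⟩
    refine le_trans (key t) ?_
    -- 34 D9 (1/(s0-1) - pos) ≤ 34 D9/(s0-1) ≤ 1/2
    have h1 : (0:ℝ) < (s0 d:ℝ) - 1 := by linarith
    have h2 : (0:ℝ) < (s0 d:ℝ) + t - 1 := by
      have : (0:ℝ) ≤ (t:ℝ) := by positivity
      linarith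
    have h3 : 34 * D9 d * (1/((s0 d:ℝ) - 1) - 1/((s0 d:ℝ) + t - 1)) ≤
        34 * D9 d * (1/((s0 d:ℝ) - 1)) := by
      have : (0:ℝ) < 1/((s0 d:ℝ) + t - 1) := by positivity
      nlinarith
    refine h3.trans ?_
    -- 34 D9 / (s0 - 1) ≤ 1/2  ⟸  68 D9 ≤ s0 - 1
    have h4 : 68 * D9 d ≤ (s0 d:ℝ) - 1 := by
      have hD9 := D9_le hd
      have h5 : (1:ℝ) ≤ (9:ℝ)^d := one_le_pow₀ (by norm_num)
      have h6 : (1:ℝ) ≤ (d:ℝ) := by exact_mod_cast hd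
      rw [s0_cast]
      nlinarith
    rw [mul_one_div, div_le_iff₀ h1]
    linarith

lemma prod_one_add_le (F : Finset ℕ) (a : ℕ → ℝ) (h0 : ∀ r ∈ F, 0 ≤ a r)
    (hS : ∑ r ∈ F, a r ≤ 1/2) : ∏ r ∈ F, (1 + a r) ≤ 1/(1 - ∑ r ∈ F, a r) := by
  induction F using Finset.induction with
  | empty => simp
  | @insert x F hx ih =>
      have hax : 0 ≤ a x := h0 x (Finset.mem_insert_self x F)
      have hsum : ∑ r ∈ insert x F, a r = a x + ∑ r ∈ F, a r := Finset.sum_insert hx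
      have hSF0 : 0 ≤ ∑ r ∈ F, a r :=
        Finset.sum_nonneg (fun r hr => h0 r (Finset.mem_insert_of_mem hr))
      have hSF : ∑ r ∈ F, a r ≤ 1/2 := by rw [hsum] at hS; linarith
      have ihF := ih (fun r hr => h0 r (Finset.mem_insert_of_mem hr)) hSF
      have hd1 : (0:ℝ) < 1 - ∑ r ∈ F, a r := by linarith
      have hd2 : (0:ℝ) < 1 - (a x + ∑ r ∈ F, a r) := by rw [hsum] at hS; linarith
      rw [Finset.prod_insert hx, hsum]
      have hprod0 : 0 ≤ ∏ r ∈ F, (1 + a r) :=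
        Finset.prod_nonneg (fun r hr => by have := h0 r (Finset.mem_insert_of_mem hr); linarith)
      calc (1 + a x) * ∏ r ∈ F, (1 + a r) ≤ (1 + a x) * (1/(1 - ∑ r ∈ F, a r)) := by
            apply mul_le_mul_of_nonneg_left ihF (by linarith)
        _ ≤ 1/(1 - (a x + ∑ r ∈ F, a r)) := by
            rw [mul_one_div, div_le_div_iff₀ hd1 hd2]
            nlinarith
  -- done

lemma one_le_prod_aux (F : Finset ℕ) (a : ℕ → ℝ) (h : ∀ r ∈ F, 0 ≤ a r) :
    1 ≤ ∏ r ∈ F, (1 + a r) := by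
  have h1 : ∏ r ∈ F, (1:ℝ) ≤ ∏ r ∈ F, (1 + a r) :=
    Finset.prod_le_prod (fun r _ => by norm_num) (fun r hr => by linarith [h r hr])
  simpa using h1

lemma rho_base (d K : ℕ) : rho d K (s0 d) = Kn K (s0 d - 1)/100 := by
  unfold rho; rw [Finset.Ioc_self, Finset.prod_empty]; ring

lemma one_le_prod_eps (hd : 1 ≤ d) (hK : 1 ≤ K) (S : ℕ) :
    1 ≤ ∏ r ∈ Finset.Ioc (s0 d) S, (1 + eps d K r) := by
  exact one_le_prod_aux _ _ (fun r hr => eps_nonneg_mem hd hK hr)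

lemma rho_pos (hd : 1 ≤ d) (hK : 1 ≤ K) (s : ℕ) : 0 < rho d K s := by
  unfold rho
  have h1 := Kn_pos hK (s0 d - 1)
  have h2 := one_le_prod_eps (K := K) (d := d) hd hK s
  nlinarith

lemma rho_mono (hd : 1 ≤ d) (hK : 1 ≤ K) {a b : ℕ} (ha : s0 d ≤ a) (hab : a ≤ b) :
    rho d K a ≤ rho d K b := by
  unfold rho
  have hsplit : (∏ r ∈ Finset.Ioc (s0 d) a, (1 + eps d K r)) *
      (∏ r ∈ Finset.Ioc a b, (1 + eps d K r)) = ∏ r ∈ Finset.Ioc (s0 d) b, (1 + eps d K r) := by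
    exact Finset.prod_Ioc_consecutive _ ha hab
  have h2 : 1 ≤ ∏ r ∈ Finset.Ioc a b, (1 + eps d K r) := by
    refine one_le_prod_aux _ _ (fun r hr => ?_)
    rw [Finset.mem_Ioc] at hr
    have h3 : r ∈ Finset.Ioc (s0 d) b := Finset.mem_Ioc.mpr ⟨by omega, hr.2⟩
    exact eps_nonneg_mem hd hK h3
  have h4 : 0 < ∏ r ∈ Finset.Ioc (s0 d) a, (1 + eps d K r) := by
    have := one_le_prod_eps (K := K) (d := d) hd hK a; linarith
  have h5 := Kn_pos hK (s0 d - 1)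
  have h6 : (∏ r ∈ Finset.Ioc (s0 d) a, (1 + eps d K r)) ≤
      ∏ r ∈ Finset.Ioc (s0 d) b, (1 + eps d K r) := by
    rw [← hsplit]; nlinarith
  nlinarith

lemma rho_succ (hd : 1 ≤ d) (hK : 1 ≤ K) {n : ℕ} (hn : s0 d ≤ n) :
    rho d K (n+1) = rho d K n * (1 + eps d K (n+1)) := by
  unfold rho
  rw [Finset.prod_Ioc_succ_top hn]
  ring

lemma rho_le (hd : 1 ≤ d) (hK : 1 ≤ K) (s : ℕ) : rho d K s ≤ Kn K (s0 d - 1)/50 := by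
  unfold rho
  have h1 := prod_one_add_le (Finset.Ioc (s0 d) s) (eps d K)
    (fun r hr => eps_nonneg_mem hd hK hr) (sum_eps_le hd hK s)
  have h2 := sum_eps_le (K := K) hd hK s
  have h3 : 0 ≤ ∑ r ∈ Finset.Ioc (s0 d) s, eps d K r :=
    Finset.sum_nonneg (fun r hr => eps_nonneg_mem hd hK hr)
  have h4 : (0:ℝ) < 1 - ∑ r ∈ Finset.Ioc (s0 d) s, eps d K r := by linarith
  have h5 : 1/(1 - ∑ r ∈ Finset.Ioc (s0 d) s, eps d K r) ≤ 2 := by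
    rw [div_le_iff₀ h4]; linarith
  have h6 := Kn_pos hK (s0 d - 1)
  have h7 : (∏ r ∈ Finset.Ioc (s0 d) s, (1 + eps d K r)) ≤ 2 := le_trans h1 h5
  nlinarith [one_le_prod_eps (K := K) (d := d) hd hK s]

end

lemma cell_coord_norm (M : ℕ) (z : ℝ) (hz1 : 0 ≤ z) (hz2 : z < M) :
    ∃ (e : Fin 3) (v : ℕ), v < M ∧
      ∀ P : ℝ, |P - z| ≤ 1/8 →
        (((e:ℕ):ℝ) - 1)/2 + v ≤ P ∧ P < (((e:ℕ):ℝ) - 1)/2 + v + 1 := by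
  have hq0 : 0 ≤ ⌊z⌋ := Int.le_floor.mpr (by exact_mod_cast hz1)
  have hqM : ⌊z⌋ < (M:ℤ) := Int.floor_lt.mpr (by exact_mod_cast hz2)
  have hql : (⌊z⌋:ℝ) ≤ z := Int.floor_le z
  have hqu : z < ⌊z⌋ + 1 := Int.lt_floor_add_one z
  set v : ℕ := ⌊z⌋.toNat with hv
  have hvq : (v:ℝ) = (⌊z⌋:ℝ) := by
    rw [hv]; exact_mod_cast congrArg (Int.cast : ℤ → ℝ) (Int.toNat_of_nonneg hq0)
  have hvM : v < M := by omega
  rcases lt_or_ge (z - ⌊z⌋) (1/8) with hr | hr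
  · refine ⟨0, v, hvM, fun P hP => ?_⟩
    have h1 := abs_le.mp hP
    constructor
    · rw [hvq]; norm_num; linarith [h1.1]
    · rw [hvq]; norm_num; linarith [h1.2]
  rcases lt_or_ge (z - ⌊z⌋) (7/8) with hr2 | hr2
  · refine ⟨1, v, hvM, fun P hP => ?_⟩
    have h1 := abs_le.mp hP
    constructor
    · rw [hvq]; norm_num; linarith [h1.1]
    · rw [hvq]; norm_num; linarith [h1.2]
  · refine ⟨2, v, hvM, fun P hP => ?_⟩
    have h1 := abs_le.mp hP
    constructor
    · rw [hvq]; norm_num; linarith [h1.1]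
    · rw [hvq]; norm_num; linarith [h1.2]

lemma cell_exists (K n : ℕ) (hK : 1 ≤ K) (y a : Fin d → ℝ)
    (ha : a ∈ box y (Kn K (n+1))) :
    ∃ (jf : Fin d → Fin 3) (vf : Fin d → Fin ((n+1)^2)),
      ∀ p : Fin d → ℝ, (∀ i, |p i - a i| ≤ Kn K n / 8) →
        p ∈ box (subCenter K n y (fun i => (((jf i : ℕ)):ℝ) - 1) (fun i => (vf i : ℕ)))
          (Kn K n) := by
  have hKp := Kn_pos hK n
  have hMcast : ((((n+1)^2 : ℕ)):ℝ) * Kn K n = Kn K (n+1) := by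
    rw [Kn_succ]; push_cast; ring
  have key : ∀ i : Fin d, ∃ (e : Fin 3) (v : ℕ), v < (n+1)^2 ∧
      ∀ P : ℝ, |P - (a i - (y i - Kn K (n+1)/2))/Kn K n| ≤ 1/8 →
        (((e:ℕ):ℝ) - 1)/2 + v ≤ P ∧ P < (((e:ℕ):ℝ) - 1)/2 + v + 1 := by
    intro i
    apply cell_coord_norm
    · apply div_nonneg _ (le_of_lt hKp)
      have := (ha i).1; linarith
    · rw [div_lt_iff₀ hKp, hMcast]
      have := (ha i).2; linarith
  choose e v hvM hmem using key
  refine ⟨e, fun i => ⟨v i, hvM i⟩, fun p hp i => ?_⟩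
  have hPz : |(p i - (y i - Kn K (n+1)/2))/Kn K n
      - (a i - (y i - Kn K (n+1)/2))/Kn K n| ≤ 1/8 := by
    rw [div_sub_div_same, abs_div, abs_of_pos hKp, div_le_iff₀ hKp]
    calc |p i - (y i - Kn K (n+1)/2) - (a i - (y i - Kn K (n+1)/2))|
        = |p i - a i| := by congr 1; ring
      _ ≤ Kn K n / 8 := hp i
      _ = 1/8 * Kn K n := by ring
  obtain ⟨hl, hu⟩ := hmem i _ hPz
  have hl' : ((((e i : ℕ)):ℝ) - 1)/2 * Kn K n + (v i) * Kn K n ≤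
      p i - (y i - Kn K (n+1)/2) := by
    have := mul_le_mul_of_nonneg_right hl (le_of_lt hKp)
    rw [div_mul_cancel₀ _ (ne_of_gt hKp)] at this
    linarith [this]
  have hu' : p i - (y i - Kn K (n+1)/2) <
      ((((e i : ℕ)):ℝ) - 1)/2 * Kn K n + (v i) * Kn K n + Kn K n := by
    have h2 : (p i - (y i - Kn K (n+1)/2))/Kn K n < (((e i:ℕ):ℝ) - 1)/2 + v i + 1 := hu
    have := (div_lt_iff₀ hKp).mp h2
    linarith [this]
  unfold subCenter
  constructor
  · push_cast
    ring_nf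
    ring_nf at hl'
    linarith [hl']
  · push_cast
    ring_nf
    ring_nf at hu'
    linarith [hu']


section
variable {d : ℕ} {A : (Fin d → ℝ) → (Fin d → ℝ) → Prop} {K : ℕ}

def cellCenter (K n : ℕ) (y : Fin d → ℝ)
    (p : (Fin d → Fin 3) × (Fin d → Fin ((n+1)^2))) : Fin d → ℝ :=
  subCenter K n y (fun i => (((p.1 i : ℕ)):ℝ) - 1) (fun i => (p.2 i : ℕ))

open Classical in
def badPairs (A : (Fin d → ℝ) → (Fin d → ℝ) → Prop) (K n : ℕ) (y : Fin d → ℝ) :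
    Finset ((Fin d → Fin 3) × (Fin d → Fin ((n+1)^2))) :=
  Finset.univ.filter (fun p => ¬ IsGood A K n (cellCenter K n y p))

lemma fin3_cases (e : Fin 3) : ((e:ℕ):ℝ) - 1 = -1 ∨ ((e:ℕ):ℝ) - 1 = 0 ∨ ((e:ℕ):ℝ) - 1 = 1 := by
  fin_cases e <;> norm_num

lemma card_badPairs_le {n : ℕ} {y : Fin d → ℝ} (hgood : IsGood A K (n+1) y) :
    (badPairs A K n y).card ≤ 9^d := by
  classical
  have hfib : (badPairs A K n y).card =
      ∑ jf ∈ (Finset.univ : Finset (Fin d → Fin 3)),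
        ((badPairs A K n y).filter (fun p => p.1 = jf)).card :=
    Finset.card_eq_sum_card_fiberwise (fun x _ => Finset.mem_univ _)
  rw [hfib]
  have hstep : ∀ jf : Fin d → Fin 3,
      ((badPairs A K n y).filter (fun p => p.1 = jf)).card ≤ 3^d := by
    intro jf
    have hj := hgood (fun i => (((jf i : ℕ)):ℝ) - 1) (fun i => fin3_cases (jf i))
    have hnc := hj.2
    set S : Set (Fin d → Fin ((n+1)^2)) :=
      {v : Fin d → Fin ((n+1)^2) |
        ¬ IsGood A K n (subCenter K n y (fun i => (((jf i : ℕ)):ℝ) - 1) (fun i => (v i : ℕ)))}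
      with hS
    have hfin : S.Finite := Set.toFinite S
    have hcard : S.ncard = S.toFinset.card := Set.ncard_eq_toFinset_card' S
    refine le_trans (Finset.card_le_card_of_injOn (t := S.toFinset) (fun p => p.2) ?_ ?_) ?_
    · intro p hp
      rw [Finset.mem_coe, Finset.mem_filter] at hp
      obtain ⟨hp1, hp2⟩ := hp
      rw [Finset.mem_coe, Set.mem_toFinset]
      rw [badPairs, Finset.mem_filter] at hp1
      have := hp1.2
      rw [hS]
      simp only [Set.mem_setOf_eq]
      subst hp2
      exact this
    · intro p hp q hq hpq
      rw [Finset.mem_coe, Finset.mem_filter] at hp hq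
      exact Prod.ext (hp.2.trans hq.2.symm) hpq
    · rw [← hcard]; exact hnc
  calc ∑ jf ∈ (Finset.univ : Finset (Fin d → Fin 3)),
        ((badPairs A K n y).filter (fun p => p.1 = jf)).card
      ≤ ∑ _jf ∈ (Finset.univ : Finset (Fin d → Fin 3)), 3^d :=
        Finset.sum_le_sum (fun jf _ => hstep jf)
    _ = 3^d * 3^d := by
        rw [Finset.sum_const, Finset.card_univ]
        simp [Fintype.card_fun, Fintype.card_fin, smul_eq_mul]
    _ = 9^d := by rw [← mul_pow]; norm_num

lemma edge_short {n : ℕ} (hK : 1 ≤ K) {y : Fin d → ℝ} (hgood : IsGood A K (n+1) y)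
    {u v : Fin d → ℝ} (hu : u ∈ box y (Kn K (n+1))) (hv : v ∈ box y (Kn K (n+1)))
    (huv : A u v) : euclid u v ≤ Kn K n / 100 := by
  have h := (hgood (fun _ => 0) (fun i => Or.inr (Or.inl rfl))).1
  have hbox : (fun i => y i + (Kn K n)/2 * (0:ℝ)) = y := by funext i; ring
  rw [hbox] at h
  exact h u v huv hu hv

lemma euclid_le_box {c : Fin d → ℝ} {r : ℝ} (hr : 0 ≤ r) {x y : Fin d → ℝ}
    (hx : x ∈ box c r) (hy : y ∈ box c r) : euclid x y ≤ Real.sqrt d * r := by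
  refine euclid_le_of_coords hr (fun i => ?_)
  obtain ⟨h1, h2⟩ := hx i
  obtain ⟨h3, h4⟩ := hy i
  rw [abs_le]
  constructor <;> linarith


end

set_option maxHeartbeats 1000000 in
lemma IND (d K : ℕ) (hd : 1 ≤ d) (hK : 1 ≤ K)
    (A : (Fin d → ℝ) → (Fin d → ℝ) → Prop) :
    ∀ n : ℕ, s0 d ≤ n + 1 → ∀ y : Fin d → ℝ, IsGood A K (n+1) y →
    ∀ T : ℕ, ∀ f : ℕ → (Fin d → ℝ),
      (∀ t, t ≤ T → f t ∈ box y (Kn K (n+1))) →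
      (∀ t, t < T → A (f t) (f (t+1))) →
      ∀ ℬ : Finset ((Fin d → Fin 3) × (Fin d → Fin ((n+1)^2))),
      ℬ ⊆ badPairs A K n y →
      (∀ p ∈ ℬ, ∀ t, 1 ≤ t → t ≤ T → f t ∉ box (cellCenter K n y p) (Kn K n)) →
      euclid (f 0) (f T) ≤ rho d K (n+1) * T
        + ((9^d : ℝ) - ℬ.card) * (Real.sqrt d * Kn K n) + Abud d K (n+1) := by
  classical
  intro n
  induction n using Nat.strong_induction_on with
  | _ n ihn =>
  intro hs0 y hgood T
  induction T using Nat.strong_induction_on with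
  | _ T ihT =>
  intro f hconf hpath ℬ hsub havoid
  have hs2 := s0_ge_two d
  have hKn1 : (0:ℝ) < Kn K (n+1) := Kn_pos hK (n+1)
  have hKn : (0:ℝ) < Kn K n := Kn_pos hK n
  have hsd : (0:ℝ) ≤ Real.sqrt d := Real.sqrt_nonneg _
  have hsd1 : (1:ℝ) ≤ Real.sqrt d := by
    rw [show (1:ℝ) = Real.sqrt 1 by simp]
    exact Real.sqrt_le_sqrt (by exact_mod_cast hd)
  have hcard : (ℬ.card : ℝ) ≤ 9^d := by
    have h1 := Finset.card_le_card hsub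
    have h2 := card_badPairs_le (A := A) hgood
    exact_mod_cast le_trans h1 h2
  have hbudget0 : 0 ≤ ((9^d : ℝ) - ℬ.card) * (Real.sqrt d * Kn K n) :=
    mul_nonneg (by linarith) (by positivity)
  have hAb : 0 ≤ Abud d K (n+1) := Abud_nonneg hK (n+1)
  have hrpos : 0 < rho d K (n+1) := rho_pos hd hK (n+1)
  rcases Nat.eq_zero_or_pos T with hT0 | hT1
  · subst hT0
    rw [euclid_self]
    have : rho d K (n+1) * (0:ℕ) = 0 := by norm_num
    rw [this]
    linarith
  -- T ≥ 1 now
  have hedge : ∀ t, t < T → euclid (f t) (f (t+1)) ≤ Kn K n / 100 := fun t ht =>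
    edge_short hK hgood (hconf t (le_of_lt ht)) (hconf (t+1) ht) (hpath t ht)
  by_cases hstep : s0 d ≤ n
  case neg =>
    -- base scale: n + 1 = s0 d
    have hbase : n + 1 = s0 d := by omega
    have hchain := euclid_chain f T
    have hsum : ∑ t ∈ Finset.range T, euclid (f t) (f (t+1)) ≤ T * (Kn K n / 100) := by
      calc ∑ t ∈ Finset.range T, euclid (f t) (f (t+1))
          ≤ ∑ _t ∈ Finset.range T, (Kn K n / 100) :=
            Finset.sum_le_sum (fun t ht => hedge t (Finset.mem_range.mp ht))
        _ = T * (Kn K n / 100) := by rw [Finset.sum_const, Finset.card_range, nsmul_eq_mul]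
    have hrv : rho d K (n+1) = Kn K n / 100 := by
      rw [hbase, rho_base]
      congr 2
      omega
    rw [hrv]
    have : (T:ℝ) * (Kn K n / 100) = Kn K n / 100 * T := by ring
    linarith [hchain, hsum, this.le]
  case pos =>
  obtain ⟨m, rfl⟩ : ∃ m, n = m + 1 := ⟨n - 1, by omega⟩
  -- anchor cell
  obtain ⟨jf, vf, hcell⟩ := cell_exists K (m+1) hK y (f 0) (hconf 0 (Nat.zero_le T))
  set c : Fin d → ℝ := subCenter K (m+1) y (fun i => (((jf i : ℕ)):ℝ) - 1)
    (fun i => ((vf i : ℕ))) with hc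
  have hf0c : f 0 ∈ box c (Kn K (m+1)) := by
    apply hcell
    intro i
    simp only [sub_self, abs_zero]
    positivity
  have hf1c : f 1 ∈ box c (Kn K (m+1)) := by
    apply hcell
    intro i
    have h1 := coord_le_euclid (f 1) (f 0) i
    have h2 := hedge 0 hT1
    rw [euclid_comm] at h1
    have := le_trans h1 h2
    linarith [this]
  by_cases hgc : IsGood A K (m+1) c
  · -- GOOD anchor cell
    by_cases hexit : ∃ t, t ≤ T ∧ f t ∉ box c (Kn K (m+1))
    · obtain ⟨t0, ht0T, ht0⟩ := hexit
      have hPex : ∃ t, f t ∉ box c (Kn K (m+1)) := ⟨t0, ht0⟩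
      set τ := Nat.find hPex with hτdef
      have hτspec : f τ ∉ box c (Kn K (m+1)) := Nat.find_spec hPex
      have hτT : τ ≤ T := le_trans (Nat.find_min' hPex ht0) ht0T
      have hτmin : ∀ t, t < τ → f t ∈ box c (Kn K (m+1)) := by
        intro t ht
        by_contra hcon
        exact absurd hcon (by simpa using Nat.find_min hPex ht)
      have hτ0 : τ ≠ 0 := fun h => hτspec (h ▸ hf0c)
      have hτ1 : τ ≠ 1 := fun h => hτspec (h ▸ hf1c)
      have hτ2 : 2 ≤ τ := by omega
      -- run inside good cell, from 0 to τ - 1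
      have hrun := ihn (m) (by omega) (by omega) c hgc (τ - 1) f
        (fun t ht => hτmin t (by omega))
        (fun t ht => hpath t (by omega))
        ∅ (Finset.empty_subset _) (by intro p hp; exact absurd hp (Finset.notMem_empty p))
      simp only [Finset.card_empty, Nat.cast_zero, sub_zero] at hrun
      -- displacement of run is at least Kn/9
      have hdisp : Kn K (m+1) / 9 ≤ euclid (f 0) (f (τ - 1)) := by
        have hout : ∃ i, ¬ (|f τ i - f 0 i| ≤ Kn K (m+1) / 8) := by
          by_contra hcon
          push_neg at hcon
          exact hτspec (hcell (f τ) (fun i => (hcon i)))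
        obtain ⟨i, hi⟩ := hout
        push_neg at hi
        have h1 : Kn K (m+1) / 8 < euclid (f τ) (f 0) :=
          lt_of_lt_of_le hi (coord_le_euclid _ _ i)
        have h2 : euclid (f (τ-1)) (f τ) ≤ Kn K (m+1) / 100 := by
          have h3 := hedge (τ - 1) (by omega)
          have h4 : τ - 1 + 1 = τ := by omega
          rwa [h4] at h3
        have h5 : euclid (f τ) (f 0) ≤ euclid (f τ) (f (τ-1)) + euclid (f (τ-1)) (f 0) :=
          euclid_triangle _ _ _
        have e1 : euclid (f τ) (f (τ-1)) = euclid (f (τ-1)) (f τ) := euclid_comm _ _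
        have e2 : euclid (f (τ-1)) (f 0) = euclid (f 0) (f (τ-1)) := euclid_comm _ _
        rw [e1, e2] at h5
        linarith
      -- absorption
      have hA1 : Abud d K (m+1+1) = Abud d K (m+1) + D9 d * Kn K m := by
        have := Abud_succ (d := d) (K := K) (n := m+1) hstep
        simpa using this
      have hAsmall : Abud d K (m+1+1) ≤ Kn K (m+1) / 20 := Abud_small hd hK hstep
      have hdenpos : 0 < Kn K (m+1)/9 - Abud d K (m+1+1) := eps_denom_pos hd hK hstep
      have hepsnn : 0 ≤ eps d K (m+1+1) := eps_nonneg hd hK hstep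
      have hepskey : eps d K (m+1+1) * (Kn K (m+1)/9 - Abud d K (m+1+1)) = Abud d K (m+1+1) := by
        rw [eps_succ_eq]
        exact div_mul_cancel₀ _ (ne_of_gt hdenpos)
      have hrunfull : euclid (f 0) (f (τ-1)) ≤ rho d K (m+1) * ((τ-1 : ℕ):ℝ)
          + Abud d K (m+1+1) := by
        have h9 : (9:ℝ)^d * (Real.sqrt d * Kn K m) = D9 d * Kn K m := by
          unfold D9; ring
        rw [hA1]
        calc euclid (f 0) (f (τ-1)) ≤ rho d K (m+1) * ((τ-1:ℕ):ℝ)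
            + (9:ℝ)^d * (Real.sqrt d * Kn K m) + Abud d K (m+1) := hrun
          _ = rho d K (m+1) * ((τ-1:ℕ):ℝ) + (Abud d K (m+1) + D9 d * Kn K m) := by
              rw [h9]; ring
      have hrhoprev : 0 < rho d K (m+1) := rho_pos hd hK (m+1)
      have hlower : Kn K (m+1)/9 - Abud d K (m+1+1) ≤ rho d K (m+1) * ((τ-1:ℕ):ℝ) := by
        linarith [hrunfull, hdisp]
      have habsorb : rho d K (m+1) * ((τ-1:ℕ):ℝ) + Abud d K (m+1+1) ≤
          rho d K (m+1+1) * ((τ-1:ℕ):ℝ) := by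
        rw [rho_succ hd hK hstep]
        have h1 : eps d K (m+1+1) * (Kn K (m+1)/9 - Abud d K (m+1+1)) ≤
            eps d K (m+1+1) * (rho d K (m+1) * ((τ-1:ℕ):ℝ)) :=
          mul_le_mul_of_nonneg_left hlower hepsnn
        rw [hepskey] at h1
        ring_nf
        ring_nf at h1
        linarith
      -- rest of the path
      have hrest := ihT (T - (τ-1)) (by omega) (fun t => f ((τ-1) + t))
        (fun t ht => hconf ((τ-1)+t) (by omega))
        (fun t ht => by
          have h1 := hpath ((τ-1)+t) (by omega)
          have h2 : (τ-1) + t + 1 = (τ-1) + (t+1) := by omega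
          rwa [h2] at h1)
        ℬ hsub
        (fun p hp t ht1 htT => havoid p hp ((τ-1)+t) (by omega) (by omega))
      simp only [Nat.add_zero] at hrest
      have hend : (τ-1) + (T - (τ-1)) = T := by omega
      rw [hend] at hrest
      -- combine
      have htri : euclid (f 0) (f T) ≤ euclid (f 0) (f (τ-1)) + euclid (f (τ-1)) (f T) :=
        euclid_triangle _ _ _
      have hcast : ((τ-1:ℕ):ℝ) + ((T - (τ-1) : ℕ):ℝ) = (T:ℝ) := by
        push_cast [Nat.cast_sub (show τ - 1 ≤ T by omega)]
        ring
      calc euclid (f 0) (f T) ≤ euclid (f 0) (f (τ-1)) + euclid (f (τ-1)) (f T) := htri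
        _ ≤ (rho d K (m+1) * ((τ-1:ℕ):ℝ) + Abud d K (m+1+1))
            + (rho d K (m+1+1) * ((T - (τ-1):ℕ):ℝ)
              + ((9^d : ℝ) - ℬ.card) * (Real.sqrt d * Kn K (m+1)) + Abud d K (m+1+1)) := by
            linarith [hrunfull, hrest]
        _ ≤ rho d K (m+1+1) * ((τ-1:ℕ):ℝ)
            + (rho d K (m+1+1) * ((T - (τ-1):ℕ):ℝ)
              + ((9^d : ℝ) - ℬ.card) * (Real.sqrt d * Kn K (m+1)) + Abud d K (m+1+1)) := by
            linarith [habsorb]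
        _ = rho d K (m+1+1) * (((τ-1:ℕ):ℝ) + ((T - (τ-1):ℕ):ℝ))
            + ((9^d : ℝ) - ℬ.card) * (Real.sqrt d * Kn K (m+1)) + Abud d K (m+1+1) := by
            ring
        _ = rho d K (m+1+1) * (T:ℝ)
            + ((9^d : ℝ) - ℬ.card) * (Real.sqrt d * Kn K (m+1)) + Abud d K (m+1+1) := by
            rw [hcast]
    · -- no exit: whole path inside the good cell
      push_neg at hexit
      have hrun := ihn (m) (by omega) (by omega) c hgc T f
        (fun t ht => hexit t ht)
        (fun t ht => hpath t ht)
        ∅ (Finset.empty_subset _) (by intro p hp; exact absurd hp (Finset.notMem_empty p))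
      simp only [Finset.card_empty, Nat.cast_zero, sub_zero] at hrun
      have hA1 : Abud d K (m+1+1) = Abud d K (m+1) + D9 d * Kn K m := by
        have := Abud_succ (d := d) (K := K) (n := m+1) hstep
        simpa using this
      have h9 : (9:ℝ)^d * (Real.sqrt d * Kn K m) = D9 d * Kn K m := by unfold D9; ring
      have hmono : rho d K (m+1) ≤ rho d K (m+1+1) := rho_mono hd hK hstep (by omega)
      have hT0' : (0:ℝ) ≤ (T:ℝ) := by positivity
      calc euclid (f 0) (f T) ≤ rho d K (m+1) * (T:ℝ)
            + (9:ℝ)^d * (Real.sqrt d * Kn K m) + Abud d K (m+1) := hrun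
        _ = rho d K (m+1) * (T:ℝ) + Abud d K (m+1+1) := by rw [hA1, h9]; ring
        _ ≤ rho d K (m+1+1) * (T:ℝ) + ((9^d : ℝ) - ℬ.card) * (Real.sqrt d * Kn K (m+1))
            + Abud d K (m+1+1) := by nlinarith [mul_le_mul_of_nonneg_right hmono hT0']
  · -- BAD anchor cell
    set p : (Fin d → Fin 3) × (Fin d → Fin ((m+1+1)^2)) := (jf, vf) with hp
    have hcc : cellCenter K (m+1) y p = c := rfl
    have hpBad : p ∈ badPairs A K (m+1) y := by
      rw [badPairs, Finset.mem_filter]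
      exact ⟨Finset.mem_univ _, by rw [hcc]; exact hgc⟩
    have hpnotin : p ∉ ℬ := by
      intro hmem
      exact havoid p hmem 1 (le_refl 1) hT1 (by rw [hcc]; exact hf1c)
    haveI hdecP : DecidablePred (fun t => f t ∈ box c (Kn K (m+1))) := Classical.decPred _
    set β := Nat.findGreatest (fun t => f t ∈ box c (Kn K (m+1))) T with hβdef
    have hβ1 : 1 ≤ β := Nat.le_findGreatest hT1 hf1c
    have hβT : β ≤ T := Nat.findGreatest_le T
    have hβmem : f β ∈ box c (Kn K (m+1)) := by
      rw [hβdef]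
      exact Nat.findGreatest_spec (P := fun t => f t ∈ box c (Kn K (m+1))) (m := 1) hT1 hf1c
    have hjump : euclid (f 0) (f β) ≤ Real.sqrt d * Kn K (m+1) :=
      euclid_le_box (le_of_lt (Kn_pos hK (m+1))) hf0c hβmem
    have hrest := ihT (T - β) (by omega) (fun t => f (β + t))
      (fun t ht => hconf (β+t) (by omega))
      (fun t ht => by
        have h1 := hpath (β+t) (by omega)
        have h2 : β + t + 1 = β + (t+1) := by omega
        rwa [h2] at h1)
      (insert p ℬ)
      (Finset.insert_subset hpBad hsub)
      (by
        intro q hq t ht1 htT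
        rcases Finset.mem_insert.mp hq with hq1 | hq2
        · subst hq1
          rw [hcc]
          intro hmem
          have := Nat.findGreatest_is_greatest (show β < β + t by omega) (show β + t ≤ T by omega)
          exact this hmem
        · exact havoid q hq2 (β+t) (by omega) (by omega))
    simp only [Nat.add_zero] at hrest
    have hend : β + (T - β) = T := by omega
    rw [hend] at hrest
    rw [Finset.card_insert_of_notMem hpnotin] at hrest
    have hcastcard : ((ℬ.card + 1 : ℕ):ℝ) = (ℬ.card : ℝ) + 1 := by push_cast; ring
    rw [hcastcard] at hrest
    have htri : euclid (f 0) (f T) ≤ euclid (f 0) (f β) + euclid (f β) (f T) :=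
      euclid_triangle _ _ _
    have hcast2 : ((T - β : ℕ):ℝ) ≤ (T:ℝ) := by
      have : ((T - β : ℕ):ℝ) = (T:ℝ) - (β:ℝ) := by
        push_cast [Nat.cast_sub hβT]; ring
      rw [this]
      have : (0:ℝ) ≤ (β:ℝ) := by positivity
      linarith
    have h0r : 0 < rho d K (m+1+1) := rho_pos hd hK (m+1+1)
    calc euclid (f 0) (f T) ≤ euclid (f 0) (f β) + euclid (f β) (f T) := htri
      _ ≤ Real.sqrt d * Kn K (m+1)
          + (rho d K (m+1+1) * ((T - β : ℕ):ℝ)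
            + ((9^d : ℝ) - ((ℬ.card:ℝ) + 1)) * (Real.sqrt d * Kn K (m+1)) + Abud d K (m+1+1)) := by
          linarith [hjump, hrest]
      _ ≤ rho d K (m+1+1) * (T:ℝ)
          + ((9^d : ℝ) - ℬ.card) * (Real.sqrt d * Kn K (m+1)) + Abud d K (m+1+1) := by
          nlinarith [mul_le_mul_of_nonneg_left hcast2 (le_of_lt h0r)]


set_option maxHeartbeats 2000000 in
theorem main
    (d K : ℕ) (hd : 1 ≤ d) (hK2 : 2 ≤ K) :
    ∃ η : ℝ, 0 < η ∧ ∀ L : ℕ, ∃ m₀ : ℕ, ∀ m : ℕ, m₀ ≤ m →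
      ∀ A : (Fin d → ℝ) → (Fin d → ℝ) → Prop,
        (∀ k : ℕ, nK K m - 1 ≤ k → IsGood A K k 0) →
        ∀ u w : Fin d → ℝ, u ∈ box 0 (L : ℝ) → w ∉ box 0 (m : ℝ) →
        ∀ (ℓ : ℕ) (f : ℕ → (Fin d → ℝ)),
          (f 0 = u ∧ f ℓ = w ∧ ∀ i < ℓ, A (f i) (f (i+1))) →
          η * euclid u w ≤ (ℓ : ℝ) := by
  classical
  have hK : 1 ≤ K := by omega
  have hs2 := s0_ge_two d
  have hD9 : 0 < D9 d := D9_pos hd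
  have hD91 : 1 ≤ D9 d := one_le_D9 hd
  set rinf : ℝ := Kn K (s0 d - 1) / 50 with hrinf
  have hrinfpos : 0 < rinf := by
    rw [hrinf]; have := Kn_pos hK (s0 d - 1); linarith
  refine ⟨1 / (32 * D9 d * rinf), by positivity, ?_⟩
  intro L
  refine ⟨K * (Nat.factorial (s0 d + 3*L))^2, ?_⟩
  intro m hm A hGood u w hu hw ℓ f hpathrel
  obtain ⟨hf0, hfl, hadj⟩ := hpathrel
  set x := s0 d + 3*L with hx
  have hxm : x ≤ m := by
    have h1 : x ≤ Nat.factorial x := Nat.self_le_factorial x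
    have h2 : Nat.factorial x ≤ K * (Nat.factorial x)^2 := by
      nlinarith [Nat.factorial_pos x]
    omega
  set n := nK K m with hn
  have hn1 : x ≤ n := by
    rw [hn]; unfold nK; exact Nat.le_findGreatest hxm hm
  have hnspec : K * (Nat.factorial n)^2 ≤ m := by
    have h := Nat.findGreatest_spec (P := fun n => K * (Nat.factorial n)^2 ≤ m) hxm hm
    rw [hn]; unfold nK; exact h
  have hKnm : Kn K n ≤ (m:ℝ) := by
    unfold Kn
    exact_mod_cast hnspec
  have hs0n : s0 d ≤ n := by omega
  -- bound the path
  set R : ℝ := ∑ t ∈ Finset.range (ℓ+1), ∑ i, |f t i| with hR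
  have hRb : ∀ t, t ≤ ℓ → ∀ i, |f t i| ≤ R := by
    intro t ht i
    rw [hR]
    have h1 : |f t i| ≤ ∑ i, |f t i| :=
      Finset.single_le_sum (f := fun i => |f t i|) (fun j _ => abs_nonneg _)
        (Finset.mem_univ i)
    have h2 : (∑ i, |f t i|) ≤ ∑ t ∈ Finset.range (ℓ+1), ∑ i, |f t i| :=
      Finset.single_le_sum (f := fun t => ∑ i, |f t i|)
        (fun j _ => Finset.sum_nonneg (fun i _ => abs_nonneg _))
        (Finset.mem_range.mpr (by omega))
    linarith
  set M : ℕ := max (n+1) (2 * Nat.ceil R + 2) with hM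
  have hfM : ∀ t, t ≤ ℓ → f t ∈ box 0 (Kn K M) := by
    intro t ht i
    have h1 : |f t i| ≤ R := hRb t ht i
    have h2 : R ≤ (Nat.ceil R : ℝ) := Nat.le_ceil R
    have h3 : (M:ℝ) ≤ Kn K M := nat_le_Kn hK M
    have h4 : (2 * Nat.ceil R + 2 : ℕ) ≤ M := le_max_right _ _
    have h5 : ((2 * Nat.ceil R + 2 : ℕ):ℝ) ≤ (M:ℝ) := by exact_mod_cast h4
    have h6 : 2 * (Nat.ceil R : ℝ) + 2 ≤ (M:ℝ) := by push_cast at h5; linarith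
    have h7 : |f t i| < Kn K M / 2 := by linarith
    have h8 := abs_lt.mp h7
    constructor
    · simp only [Pi.zero_apply]; linarith [h8.1]
    · simp only [Pi.zero_apply]; linarith [h8.2]
  have hPn : ∃ t, t ≤ ℓ ∧ f t ∉ box 0 (Kn K n) := by
    refine ⟨ℓ, le_refl _, ?_⟩
    rw [hfl]
    intro hmem
    exact hw (box_mono hKnm hmem)
  have hPM : ¬ (∃ t, t ≤ ℓ ∧ f t ∉ box 0 (Kn K M)) := by
    rintro ⟨t, ht, hmem⟩
    exact hmem (hfM t ht)
  set PJ : ℕ → Prop := fun j => ∃ t, t ≤ ℓ ∧ f t ∉ box 0 (Kn K j) with hPJdef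
  have hnM : n ≤ M := by omega
  set J := Nat.findGreatest PJ M with hJ
  have hJn : n ≤ J := Nat.le_findGreatest hnM hPn
  have hJM : J ≤ M := Nat.findGreatest_le M
  have hPJ : PJ J := Nat.findGreatest_spec (m := n) hnM hPn
  have hJltM : J < M := by
    rcases Nat.lt_or_ge J M with h | h
    · exact h
    · exfalso; have : J = M := by omega
      rw [this] at hPJ; exact hPM hPJ
  have hconfJ1 : ∀ t, t ≤ ℓ → f t ∈ box 0 (Kn K (J+1)) := by
    have hng := Nat.findGreatest_is_greatest (P := PJ) (show J < J + 1 by omega)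
      (show J + 1 ≤ M by omega)
    intro t ht
    by_contra hcon
    exact hng ⟨t, ht, hcon⟩
  have hs0J : s0 d ≤ J := by omega
  have hGJ1 : IsGood A K (J+1) 0 := hGood (J+1) (by omega)
  have hKJ : 0 < Kn K J := Kn_pos hK J
  have hsd : (0:ℝ) ≤ Real.sqrt d := Real.sqrt_nonneg _
  -- Kn K J is large compared with L
  have hLKJ : (3 * L : ℝ) ≤ Kn K J := by
    have h1 : (J:ℝ) ≤ Kn K J := nat_le_Kn hK J
    have h2 : (3*L : ℕ) ≤ J := by omega
    have h3 : ((3*L:ℕ):ℝ) ≤ (J:ℝ) := by exact_mod_cast h2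
    push_cast at h3
    linarith
  have huL : ∀ i, |u i| ≤ (L:ℝ)/2 := by
    intro i
    have h1 := hu i
    simp only [Pi.zero_apply] at h1
    rw [abs_le]
    constructor <;> [linarith [h1.1]; linarith [h1.2]]
  have hubox : u ∈ box 0 (Kn K J) := by
    intro i
    have h1 := huL i
    have h2 := abs_le.mp h1
    simp only [Pi.zero_apply]
    constructor <;> [linarith [h2.1]; linarith [h2.2]]
  have hrhoJ1 : rho d K (J+1) ≤ rinf := by rw [hrinf]; exact rho_le hd hK (J+1)
  have hrhoJ : rho d K J ≤ rinf := by rw [hrinf]; exact rho_le hd hK J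
  have hAbJ1 : Abud d K (J+1) ≤ Kn K J / 20 := Abud_small hd hK hs0J
  -- case split
  clear_value J
  rcases le_or_gt (4 * D9 d * Kn K J) (euclid u w) with hcase | hcase
  · -- Case 1: big displacement, apply IND at scale J+1 to the whole path
    obtain ⟨J', rfl⟩ : ∃ J', J = J' + 1 := ⟨J - 1, by omega⟩
    have hindJ1 := IND d K hd hK A (J'+1) (by omega) 0 hGJ1 ℓ f
      (fun t ht => hconfJ1 t ht)
      (fun t ht => hadj t ht)
      ∅ (Finset.empty_subset _) (by intro p hp; exact absurd hp (Finset.notMem_empty p))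
    simp only [Finset.card_empty, Nat.cast_zero, sub_zero] at hindJ1
    rw [hf0, hfl] at hindJ1
    have h9 : (9:ℝ)^d * (Real.sqrt d * Kn K (J'+1)) = D9 d * Kn K (J'+1) := by
      unfold D9; ring
    have hAb2 : Abud d K (J'+1+1) ≤ Kn K (J'+1)/20 := hAbJ1
    have hD920 : Kn K (J'+1)/20 ≤ D9 d * Kn K (J'+1) := by nlinarith
    have hchain2 : euclid u w ≤ rinf * (ℓ:ℝ) + 2 * (D9 d * Kn K (J'+1)) := by
      have hl0 : (0:ℝ) ≤ (ℓ:ℝ) := by positivity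
      calc euclid u w ≤ rho d K (J'+1+1) * (ℓ:ℝ)
            + (9:ℝ)^d * (Real.sqrt d * Kn K (J'+1)) + Abud d K (J'+1+1) := hindJ1
        _ ≤ rinf * (ℓ:ℝ) + D9 d * Kn K (J'+1) + D9 d * Kn K (J'+1) := by
            nlinarith [mul_le_mul_of_nonneg_right hrhoJ1 hl0]
        _ = rinf * (ℓ:ℝ) + 2 * (D9 d * Kn K (J'+1)) := by ring
    -- 2 D9 K_J ≤ euclid/2
    have h10 : 2 * (D9 d * Kn K (J'+1)) ≤ euclid u w / 2 := by linarith
    have h11 : euclid u w / 2 ≤ rinf * (ℓ:ℝ) := by linarith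
    rw [one_div, inv_mul_le_iff₀ (by positivity : (0:ℝ) < 32 * D9 d * rinf)]
    have hl0 : (0:ℝ) ≤ (ℓ:ℝ) := by positivity
    have hX : (0:ℝ) ≤ rinf * (ℓ:ℝ) := mul_nonneg (le_of_lt hrinfpos) hl0
    have h12 : rinf * (ℓ:ℝ) ≤ D9 d * (rinf * (ℓ:ℝ)) := by nlinarith
    have h13 : (0:ℝ) ≤ D9 d * (rinf * (ℓ:ℝ)) := by positivity
    linarith
  · -- Case 2: small displacement
    have hPexJ : ∃ t, f t ∉ box 0 (Kn K J) := by
      obtain ⟨t, ht, hmem⟩ := hPJ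
      exact ⟨t, hmem⟩
    set τ := Nat.find hPexJ with hτdef
    have hτspec : f τ ∉ box 0 (Kn K J) := Nat.find_spec hPexJ
    have hτℓ : τ ≤ ℓ := by
      obtain ⟨t, ht, hmem⟩ := hPJ
      exact le_trans (Nat.find_min' hPexJ hmem) ht
    have hτmin : ∀ t, t < τ → f t ∈ box 0 (Kn K J) := by
      intro t ht
      by_contra hcon
      exact absurd hcon (by simpa using Nat.find_min hPexJ ht)
    have hτ1 : 1 ≤ τ := by
      rcases Nat.eq_zero_or_pos τ with h | h
      · exfalso; rw [h, hf0] at hτspec; exact hτspec hubox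
      · exact h
    -- exit edge is short
    have hτedge : euclid (f (τ-1)) (f τ) ≤ Kn K J / 100 := by
      have h1 := edge_short hK hGJ1 (hconfJ1 (τ-1) (by omega)) (hconfJ1 τ (by omega))
        (by
          have := hadj (τ-1) (by omega)
          have h2 : τ - 1 + 1 = τ := by omega
          rwa [h2] at this)
      exact h1
    obtain ⟨i, hi⟩ : ∃ i, Kn K J / 2 ≤ |f τ i| := by
      by_contra hcon
      push_neg at hcon
      apply hτspec
      intro i
      have := hcon i
      have h2 := abs_lt.mp this
      simp only [Pi.zero_apply]
      constructor <;> [linarith [h2.1]; linarith [h2.2]]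
    have hprev : Kn K J / 2 - Kn K J / 100 ≤ |f (τ-1) i| := by
      have h1 := coord_le_euclid (f (τ-1)) (f τ) i
      have h2 : |f τ i| - |f (τ-1) i| ≤ |f (τ-1) i - f τ i| := by
        rw [abs_sub_comm]
        exact abs_sub_abs_le_abs_sub _ _
      linarith
    have hlow : Kn K J / 4 ≤ euclid (f 0) (f (τ-1)) := by
      have h1 := coord_le_euclid (f 0) (f (τ-1)) i
      have h2 : |f (τ-1) i| - |f 0 i| ≤ |f 0 i - f (τ-1) i| := by
        rw [abs_sub_comm]
        exact abs_sub_abs_le_abs_sub _ _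
      have h3 : |f 0 i| ≤ (L:ℝ)/2 := by rw [hf0]; exact huL i
      have h4 : (L:ℝ)/2 ≤ Kn K J / 6 := by linarith
      linarith
    -- apply IND at scale J to the initial segment
    obtain ⟨J', rfl⟩ : ∃ J', J = J' + 1 := ⟨J - 1, by omega⟩
    have hGJ : IsGood A K (J'+1) 0 := hGood (J'+1) (by omega)
    have hindJ := IND d K hd hK A J' (by omega) 0 hGJ (τ-1) f
      (fun t ht => hτmin t (by omega))
      (fun t ht => hadj t (by omega))
      ∅ (Finset.empty_subset _) (by intro p hp; exact absurd hp (Finset.notMem_empty p))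
    simp only [Finset.card_empty, Nat.cast_zero, sub_zero] at hindJ
    have h9 : (9:ℝ)^d * (Real.sqrt d * Kn K J') = D9 d * Kn K J' := by unfold D9; ring
    have hAbfull : D9 d * Kn K J' + Abud d K (J'+1) ≤ Kn K (J'+1) / 20 := by
      have h1 : Abud d K (J'+1+1) = Abud d K (J'+1) + D9 d * Kn K J' := by
        have h2 := Abud_succ (d := d) (K := K) (n := J'+1) hs0J
        simpa using h2
      have h3 := Abud_small hd hK (K := K) (n := J'+1) hs0J
      rw [h1] at h3
      linarith
    have hface : Kn K (J'+1)/4 - Kn K (J'+1)/20 ≤ rho d K (J'+1) * ((τ-1:ℕ):ℝ) := by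
      rw [h9] at hindJ
      linarith [hlow, hAbfull, hindJ]
    have hrpos : 0 < rho d K (J'+1) := rho_pos hd hK (J'+1)
    have hτcast : ((τ-1:ℕ):ℝ) ≤ (ℓ:ℝ) := by exact_mod_cast (by omega : τ - 1 ≤ ℓ)
    have hKJ5 : Kn K (J'+1)/5 ≤ rinf * (ℓ:ℝ) := by
      have h1 : rho d K (J'+1) * ((τ-1:ℕ):ℝ) ≤ rinf * (ℓ:ℝ) := by
        have h2 : (0:ℝ) ≤ ((τ-1:ℕ):ℝ) := by positivity
        nlinarith
      linarith
    -- conclude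
    rw [one_div, inv_mul_le_iff₀ (by positivity : (0:ℝ) < 32 * D9 d * rinf)]
    have h20 : euclid u w ≤ 4 * D9 d * Kn K (J'+1) := le_of_lt hcase
    have hl0 : (0:ℝ) ≤ (ℓ:ℝ) := by positivity
    have h21 : D9 d * Kn K (J'+1) ≤ D9 d * (5 * (rinf * (ℓ:ℝ))) :=
      mul_le_mul_of_nonneg_left (by linarith) (le_of_lt hD9)
    have h13 : (0:ℝ) ≤ D9 d * (rinf * (ℓ:ℝ)) := by positivity
    linarith


end GB

/-- Deterministic consequence of goodness of all large boxes: there is `η > 0`,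
depending only on `d` and `K`, such that for every `L` and all sufficiently large `m`,
for any graph in which `B_k(o)` is good for all `k ≥ n_K(m) - 1`, every path joining a
vertex in `Λ_L` to a vertex outside `Λ_m` has at least `η` times the Euclidean distance
of its endpoints many edges. -/
theorem good_boxes_imply_linear_distance
    (d K : ℕ) (hd : 1 ≤ d) (hK : Even K) (hK2 : 2 ≤ K) :
    ∃ η : ℝ, 0 < η ∧ ∀ L : ℕ, ∃ m₀ : ℕ, ∀ m : ℕ, m₀ ≤ m →
      ∀ G : SimpleGraph (Fin d → ℝ),
        (∀ k : ℕ, nK K m - 1 ≤ k → IsGood G.Adj K k 0) →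
        ∀ u w : Fin d → ℝ, u ∈ box 0 (L : ℝ) → w ∉ box 0 (m : ℝ) →
        ∀ (ℓ : ℕ) (f : ℕ → (Fin d → ℝ)), IsPathRel G.Adj u w ℓ f →
          η * euclid u w ≤ (ℓ : ℝ) := by
  obtain ⟨η, hη, hmain⟩ := GB.main d K hd hK2
  refine ⟨η, hη, fun L => ?_⟩
  obtain ⟨m₀, hm₀⟩ := hmain L
  refine ⟨m₀, fun m hm G hGood u w hu hw ℓ f hp => ?_⟩
  exact hm₀ m hm G.Adj hGood u w hu hw ℓ f hp
end
end

section
/- Let d ≥ 1 be an integer, let α > 0 and c > 4d + 4α be real numbers, and let C_B, C_M ≥ 0. There exists N₀ ∈ ℕ such that for every integer N ≥ N₀ the following holds: if ψ : {1, 2, 3, …} → [0, ∞) satisfies ψ(n) ≤ ((n+1)!)^{−2α + c/n} for all 1 ≤ n ≤ N, and ψ(n) ≤ 3^d·C_B·n^{2d}·((n−1)!)^{−2α} + 3^d·n^{4d}·( ψ(n−1)² + C_M·((n−1)!)^{−2α} ) for all n > N, then ψ(n) ≤ ((n+1)!)^{−2α + c/n} for all n ≥ 1. -/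
open Real Filter
set_option maxHeartbeats 1000000

private lemma fact_pos' (n : ℕ) : (0:ℝ) < (n.factorial : ℝ) := by
  exact_mod_cast n.factorial_pos

private lemma log_factorial_lb (n : ℕ) :
    (n:ℝ) * Real.log n - n ≤ Real.log (n.factorial : ℝ) := by
  rcases Nat.eq_zero_or_pos n with h | h
  · subst h; simp
  · have hx : (0:ℝ) < (n:ℝ) := by exact_mod_cast h
    have h1 : (n:ℝ) ^ n / (n.factorial : ℝ) ≤ Real.exp n :=
      Real.pow_div_factorial_le_exp (n:ℝ) hx.le n
    have h2 : (n:ℝ) ^ n ≤ Real.exp n * (n.factorial : ℝ) := by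
      rw [div_le_iff₀ (fact_pos' n)] at h1; linarith
    have h3 : Real.log ((n:ℝ) ^ n) ≤ Real.log (Real.exp n * (n.factorial : ℝ)) :=
      Real.log_le_log (by positivity) h2
    rw [Real.log_pow, Real.log_mul (Real.exp_ne_zero _) (fact_pos' n).ne',
      Real.log_exp] at h3
    linarith

private lemma tendsto_log_nat : Tendsto (fun n : ℕ => Real.log ((n:ℝ) + 1)) atTop atTop :=
  Real.tendsto_log_atTop.comp ((tendsto_natCast_atTop_atTop).atTop_add tendsto_const_nhds)

private lemma log_add_two_le (x : ℝ) (hx : 0 ≤ x) :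
    Real.log (x + 2) ≤ Real.log (x + 1) + 1 := by
  have h1 : Real.log (x + 2) ≤ Real.log (2 * (x + 1)) :=
    Real.log_le_log (by linarith) (by linarith)
  rw [Real.log_mul (by norm_num) (by linarith)] at h1
  have h2 : Real.log 2 ≤ 1 := by
    calc Real.log 2 ≤ Real.log (Real.exp 1) :=
      Real.log_le_log (by norm_num) (by nlinarith [Real.exp_one_gt_d9])
    _ = 1 := Real.log_exp 1
  linarith

private lemma one_third_eq : (1/3 : ℝ) = Real.exp (-Real.log 3) := by
  rw [Real.exp_neg, Real.exp_log (by norm_num : (0:ℝ) < 3)]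
  norm_num

private lemma log_fact_succ (n : ℕ) :
    Real.log (Nat.factorial (n+1) : ℝ)
      = Real.log (Nat.factorial n : ℝ) + Real.log ((n:ℝ)+1) := by
  have h : (Nat.factorial (n+1) : ℝ) = ((n:ℝ)+1) * (Nat.factorial n : ℝ) := by
    rw [Nat.factorial_succ]; push_cast; ring
  rw [h, Real.log_mul (by positivity) (fact_pos' n).ne']; ring

/-- The "polynomial" terms. -/
private lemma ev_poly (α c : ℝ) (hα : 0 < α) (K : ℝ) (hK : 0 ≤ K) (k : ℕ)
    (hk : (k:ℝ) + 4*α < c) :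
    ∀ᶠ n : ℕ in atTop,
      K * ((n:ℝ)+1)^k * (Nat.factorial n : ℝ) ^ (-2*α) ≤
      1/3 * (Nat.factorial (n+2) : ℝ) ^ (-2*α + c/((n:ℝ)+1)) := by
  rcases eq_or_lt_of_le hK with h0 | hKpos
  · filter_upwards with n
    rw [← h0]
    have : (0:ℝ) < (Nat.factorial (n+2) : ℝ) ^ (-2*α + c/((n:ℝ)+1)) :=
      Real.rpow_pos_of_pos (fact_pos' _) _
    nlinarith
  have hc0 : 0 < c := by
    have h0 : (0:ℝ) ≤ (k:ℝ) + 4*α := by positivity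
    linarith
  have hε : 0 < c - (k:ℝ) - 4*α := by linarith
  have hev := ((tendsto_log_nat.const_mul_atTop hε).eventually_ge_atTop
      (Real.log K + Real.log 3 + 2*α + c))
  filter_upwards [hev] with n hn
  have hx1 : (0:ℝ) < (n:ℝ)+1 := by positivity
  have hF0 : (0:ℝ) < (Nat.factorial n : ℝ) := fact_pos' n
  have hF2 : (0:ℝ) < (Nat.factorial (n+2) : ℝ) := fact_pos' (n+2)
  have hrel0 : Real.log (Nat.factorial n : ℝ)
      = Real.log (Nat.factorial (n+1) : ℝ) - Real.log ((n:ℝ)+1) := by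
    rw [log_fact_succ n]; ring
  have hrel2 : Real.log (Nat.factorial (n+2) : ℝ)
      = Real.log (Nat.factorial (n+1) : ℝ) + Real.log ((n:ℝ)+2) := by
    rw [show n+2 = (n+1)+1 from rfl, log_fact_succ (n+1)]; push_cast; ring
  set L1 := Real.log ((n:ℝ)+1) with hL1def
  set L2 := Real.log ((n:ℝ)+2) with hL2def
  set Λ := Real.log (Nat.factorial (n+1) : ℝ) with hΛdef
  have hΛlb : ((n:ℝ)+1) * L1 - ((n:ℝ)+1) ≤ Λ := by
    have := log_factorial_lb (n+1); push_cast at this; exact this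
  have hL1nn : 0 ≤ L1 := Real.log_nonneg (by push_cast; linarith)
  have hL2nn : 0 ≤ L2 := Real.log_nonneg (by push_cast; linarith)
  have hL2le : L2 ≤ L1 + 1 := by
    have := log_add_two_le (n:ℝ) (by positivity); exact this
  -- rewrite everything as exponentials
  rw [← Real.rpow_natCast ((n:ℝ)+1) k, Real.rpow_def_of_pos hx1,
    Real.rpow_def_of_pos hF0, Real.rpow_def_of_pos hF2, one_third_eq,
    ← Real.exp_log hKpos, ← Real.exp_add, ← Real.exp_add, ← Real.exp_add,
    Real.exp_le_exp]
  rw [hrel0, hrel2]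
  -- now a linear inequality in logs
  set q : ℝ := c / ((n:ℝ)+1) with hqdef
  have hq : 0 < q := div_pos hc0 hx1
  have h7 : c * L1 - c ≤ q * Λ := by
    have h7a : q * (((n:ℝ)+1) * L1 - ((n:ℝ)+1)) ≤ q * Λ :=
      mul_le_mul_of_nonneg_left hΛlb hq.le
    have h7b : q * (((n:ℝ)+1) * L1 - ((n:ℝ)+1)) = c * L1 - c := by
      rw [hqdef]; field_simp
    linarith
  have h8 : 0 ≤ q * L2 := mul_nonneg hq.le hL2nn
  have h9 : 2*α*L2 ≤ 2*α*(L1+1) := by nlinarith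
  have h10 : (k:ℝ) * L1 ≥ 0 := by positivity
  nlinarith [hn, h7, h8, h9]

/-- The square term. -/
private lemma ev_sq (d : ℕ) (α c : ℝ) (hα : 0 < α) (hc : 4*(d:ℝ) + 4*α < c) :
    ∀ᶠ n : ℕ in atTop,
      (3:ℝ)^d * ((n:ℝ)+1)^(4*d) * ((Nat.factorial (n+1) : ℝ) ^ (-2*α + c/(n:ℝ)))^2 ≤
      1/3 * (Nat.factorial (n+2) : ℝ) ^ (-2*α + c/((n:ℝ)+1)) := by
  have hc0 : 0 < c := by
    have h0 : (0:ℝ) ≤ 4*(d:ℝ) + 4*α := by positivity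
    linarith
  have b1 : ∀ᶠ n : ℕ in atTop, 2*c/(n:ℝ) ≤ α := by
    have ht : Tendsto (fun n : ℕ => 2*c/(n:ℝ)) atTop (nhds 0) :=
      Tendsto.div_atTop tendsto_const_nhds tendsto_natCast_atTop_atTop
    exact ht.eventually (eventually_le_nhds hα)
  have b2 : ∀ᶠ n : ℕ in atTop, 2 ≤ Real.log ((n:ℝ)+1) :=
    tendsto_log_nat.eventually_ge_atTop 2
  have hxt : Tendsto (fun n : ℕ => (α/4) * ((n:ℝ)+1)) atTop atTop :=
    (tendsto_natCast_atTop_atTop.atTop_add tendsto_const_nhds).const_mul_atTop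
      (by positivity)
  have b3 : ∀ᶠ n : ℕ in atTop, 4*(d:ℝ) + 2*α ≤ (α/4) * ((n:ℝ)+1) :=
    hxt.eventually_ge_atTop _
  have b4 : ∀ᶠ n : ℕ in atTop,
      ((d:ℝ)+1) * Real.log 3 + 2*α ≤ (α/2) * ((n:ℝ)+1) := by
    have hxt2 : Tendsto (fun n : ℕ => (α/2) * ((n:ℝ)+1)) atTop atTop :=
      (tendsto_natCast_atTop_atTop.atTop_add tendsto_const_nhds).const_mul_atTop
        (by positivity)
    exact hxt2.eventually_ge_atTop _
  have b5 : ∀ᶠ n : ℕ in atTop, 1 ≤ n := eventually_ge_atTop 1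
  filter_upwards [b1, b2, b3, b4, b5] with n h1 h2 h3 h4 h5
  have hx0 : (0:ℝ) < (n:ℝ) := by exact_mod_cast h5
  have hx1 : (0:ℝ) < (n:ℝ)+1 := by positivity
  have hF1 : (0:ℝ) < (Nat.factorial (n+1) : ℝ) := fact_pos' (n+1)
  have hF2 : (0:ℝ) < (Nat.factorial (n+2) : ℝ) := fact_pos' (n+2)
  have hrel2 : Real.log (Nat.factorial (n+2) : ℝ)
      = Real.log (Nat.factorial (n+1) : ℝ) + Real.log ((n:ℝ)+2) := by
    rw [show n+2 = (n+1)+1 from rfl, log_fact_succ (n+1)]; push_cast; ring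
  have hsq : ((Nat.factorial (n+1) : ℝ) ^ (-2*α + c/(n:ℝ)))^2
      = (Nat.factorial (n+1) : ℝ) ^ ((-2*α + c/(n:ℝ))*2) := by
    rw [← Real.rpow_natCast ((Nat.factorial (n+1) : ℝ) ^ (-2*α + c/(n:ℝ))) 2,
      ← Real.rpow_mul hF1.le]
    norm_num
  have hΛlb : ((n:ℝ)+1) * Real.log ((n:ℝ)+1) - ((n:ℝ)+1)
      ≤ Real.log (Nat.factorial (n+1) : ℝ) := by
    have := log_factorial_lb (n+1); push_cast at this; exact this
  have hΛnn : 0 ≤ Real.log (Nat.factorial (n+1) : ℝ) :=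
    Real.log_nonneg (by exact_mod_cast Nat.one_le_iff_ne_zero.mpr (Nat.factorial_pos (n+1)).ne')
  have hL1nn : 0 ≤ Real.log ((n:ℝ)+1) := Real.log_nonneg (by linarith)
  have hL2nn : 0 ≤ Real.log ((n:ℝ)+2) := Real.log_nonneg (by linarith)
  have hL2le : Real.log ((n:ℝ)+2) ≤ Real.log ((n:ℝ)+1) + 1 :=
    log_add_two_le (n:ℝ) (by positivity)
  rw [hsq, ← Real.rpow_natCast ((n:ℝ)+1) (4*d), ← Real.rpow_natCast (3:ℝ) d,
    Real.rpow_def_of_pos hx1, Real.rpow_def_of_pos hF1, Real.rpow_def_of_pos hF2,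
    Real.rpow_def_of_pos (by norm_num : (0:ℝ) < 3), one_third_eq,
    ← Real.exp_add, ← Real.exp_add, ← Real.exp_add, Real.exp_le_exp, hrel2]
  push_cast
  set L1 := Real.log ((n:ℝ)+1) with hL1def
  set L2 := Real.log ((n:ℝ)+2) with hL2def
  set Λ := Real.log (Nat.factorial (n+1) : ℝ) with hΛdef
  set q1 : ℝ := c/(n:ℝ) with hq1def
  set q2 : ℝ := c/((n:ℝ)+1) with hq2def
  have hq1 : 0 < q1 := div_pos hc0 hx0
  have hq2 : 0 < q2 := div_pos hc0 hx1
  have h1' : 2*q1 ≤ α := by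
    have : 2*c/(n:ℝ) = 2*q1 := by rw [hq1def]; ring
    linarith [this ▸ h1]
  -- coefficient of Λ on the RHS minus twice the LHS exponent is at least α
  have hcoef : α ≤ 2*α + q2 - 2*q1 := by linarith
  have hA : α * Λ ≤ (2*α + q2 - 2*q1) * Λ := mul_le_mul_of_nonneg_right hcoef hΛnn
  have hB : α * (((n:ℝ)+1) * L1 - ((n:ℝ)+1)) ≤ α * Λ :=
    mul_le_mul_of_nonneg_left hΛlb hα.le
  have hC : (α/2) * (((n:ℝ)+1)) * L1 ≤ α * (((n:ℝ)+1) * L1 - ((n:ℝ)+1)) := by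
    nlinarith [mul_nonneg (mul_nonneg hα.le hx1.le) (by linarith : (0:ℝ) ≤ L1 - 2)]
  have hD : (4*(d:ℝ) + 2*α) * L1 ≤ ((α/4) * ((n:ℝ)+1)) * L1 :=
    mul_le_mul_of_nonneg_right h3 hL1nn
  have hE : ((d:ℝ)+1) * Real.log 3 + 2*α ≤ ((α/4) * ((n:ℝ)+1)) * L1 := by
    have : ((α/4) * ((n:ℝ)+1)) * 2 ≤ ((α/4) * ((n:ℝ)+1)) * L1 :=
      mul_le_mul_of_nonneg_left h2 (by positivity)
    nlinarith
  have h8 : 0 ≤ q2 * L2 := mul_nonneg hq2.le hL2nn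
  have h9 : 2*α*L2 ≤ 2*α*(L1+1) := by nlinarith
  linarith [hA, hB, hC, hD, hE, h8, h9]


/-- The analytic recursion for the probability that a renormalisation box is bad: if
`ψ(n) ≤ ((n+1)!)^{-2α+c/n}` for `1 ≤ n ≤ N` and
`ψ(n) ≤ 3^d·C_B·n^{2d}·((n-1)!)^{-2α} + 3^d·n^{4d}·(ψ(n-1)² + C_M·((n-1)!)^{-2α})` for
`n > N`, then `ψ(n) ≤ ((n+1)!)^{-2α+c/n}` for all `n ≥ 1`, provided `N` is large enough
(depending on `d`, `α`, `c`, `C_B`, `C_M`). -/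
theorem bad_box_recursion (d : ℕ) (hd : 1 ≤ d) (α c : ℝ) (hα : 0 < α)
    (hc : 4 * (d : ℝ) + 4 * α < c) (CB CM : ℝ) (hCB : 0 ≤ CB) (hCM : 0 ≤ CM) :
    ∃ N₀ : ℕ, ∀ N : ℕ, N₀ ≤ N → ∀ ψ : ℕ → ℝ,
      (∀ n : ℕ, 1 ≤ n → 0 ≤ ψ n) →
      (∀ n : ℕ, 1 ≤ n → n ≤ N →
        ψ n ≤ (Nat.factorial (n+1) : ℝ) ^ (-2 * α + c / n)) →
      (∀ n : ℕ, N < n →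
        ψ n ≤ 3^d * CB * (n : ℝ)^(2*d) * (Nat.factorial (n-1) : ℝ) ^ (-2 * α)
            + 3^d * (n : ℝ)^(4*d) *
                (ψ (n-1)^2 + CM * (Nat.factorial (n-1) : ℝ) ^ (-2 * α))) →
      ∀ n : ℕ, 1 ≤ n → ψ n ≤ (Nat.factorial (n+1) : ℝ) ^ (-2 * α + c / n) := by
  
  have eA := ev_poly α c hα ((3:ℝ)^d * CB) (by positivity) (2*d)
    (by push_cast; linarith)
  have eC := ev_poly α c hα ((3:ℝ)^d * CM) (by positivity) (4*d)
    (by push_cast; linarith)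
  have eB := ev_sq d α c hα hc
  obtain ⟨M, hM⟩ := eventually_atTop.mp ((eA.and (eB.and eC)))
  refine ⟨M + 2, ?_⟩
  intro N hN ψ hψ0 hbase hrec n
  induction n with
  | zero => intro h; exact absurd h (by omega)
  | succ n IH =>
    intro _
    by_cases hle : n + 1 ≤ N
    · exact hbase _ (by omega) hle
    · push_neg at hle
      have hn1 : 1 ≤ n := by omega
      obtain ⟨hA, hB, hC⟩ := hM n (by omega)
      have IH' := IH hn1
      have hrec' := hrec (n+1) hle
      rw [Nat.add_sub_cancel] at hrec'
      push_cast at hrec' ⊢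
      rw [show n+1+1 = n+2 from rfl]
      set b : ℝ := (Nat.factorial (n+1) : ℝ) ^ (-2 * α + c / (n:ℝ)) with hbdef
      set f : ℝ := (Nat.factorial n : ℝ) ^ (-2 * α) with hfdef
      have hsq : ψ n ^ 2 ≤ b ^ 2 := pow_le_pow_left₀ (hψ0 n hn1) IH' 2
      have hmul : (3:ℝ)^d * ((n:ℝ)+1)^(4*d) * (ψ n ^ 2 + CM * f)
          ≤ (3:ℝ)^d * ((n:ℝ)+1)^(4*d) * (b ^ 2 + CM * f) := by
        apply mul_le_mul_of_nonneg_left (by linarith) (by positivity)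
      linarith [hA, hB, hC, hrec', hmul]
end

section
/- Let d ≥ 1 be an integer, r > 0, and let v_0, v_1, …, v_ℓ be points of ℝ^d with |v_i − v_{i−1}| ≤ r/100 for all 1 ≤ i ≤ ℓ and |v_ℓ − v_0| > r/2. Then there exist an integer m ≥ 2 and indices 0 = j_1 < j_2 < ⋯ < j_m = ℓ such that for every 1 ≤ i ≤ m−1: (1) |v_{j_{i+1}} − v_{j_i}| > r/16, and (2) |v_t − v_{j_i}| < r/2 for every index t with j_i ≤ t ≤ j_{i+1}. -/
noncomputable section
open MeasureTheory ProbabilityTheory Filter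

namespace GreedyAux

lemma euclid_eq_dist {d : ℕ} (x y : Fin d → ℝ) :
    euclid x y = dist ((WithLp.equiv 2 (Fin d → ℝ)).symm x) ((WithLp.equiv 2 (Fin d → ℝ)).symm y) := by
  rw [EuclideanSpace.dist_eq]
  unfold euclid
  congr 1
  apply Finset.sum_congr rfl
  intro i _
  rw [WithLp.equiv_symm_apply, WithLp.ofLp_toLp, WithLp.ofLp_toLp, Real.dist_eq, sq_abs]

lemma euclid_comm {d : ℕ} (x y : Fin d → ℝ) : euclid x y = euclid y x := by
  rw [euclid_eq_dist, euclid_eq_dist, dist_comm]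

lemma euclid_self {d : ℕ} (x : Fin d → ℝ) : euclid x x = 0 := by
  rw [euclid_eq_dist, dist_self]

lemma euclid_tri {d : ℕ} (x y z : Fin d → ℝ) : euclid x z ≤ euclid x y + euclid y z := by
  rw [euclid_eq_dist, euclid_eq_dist, euclid_eq_dist]; exact dist_triangle _ _ _

/-- The set of candidate next indices in the greedy construction. -/
def cand {d : ℕ} (v : ℕ → Fin d → ℝ) (r : ℝ) (ℓ j : ℕ) : Set ℕ :=
  {k | k ≤ ℓ ∧ j < k ∧ r/16 < euclid (v k) (v j)}

/-- The greedy next index. -/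
def nxt {d : ℕ} (v : ℕ → Fin d → ℝ) (r : ℝ) (ℓ j : ℕ) : ℕ :=
  sInf (cand v r ℓ j)

/-- The greedy sequence of indices. -/
def tau {d : ℕ} (v : ℕ → Fin d → ℝ) (r : ℝ) (ℓ : ℕ) : ℕ → ℕ
  | 0 => 0
  | i+1 => nxt v r ℓ (tau v r ℓ i)

end GreedyAux

open GreedyAux in
/-- Greedy decomposition of a path with steps of length at most `r/100` whose endpoints
are at distance more than `r/2`: there are indices `0 = j_1 < j_2 < ⋯ < j_m = ℓ`
(`m ≥ 2`) such that each sub-segment bridges Euclidean distance more than `r/16` while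
staying within distance `r/2` of its starting point. -/
theorem greedy_path_decomposition
    (d : ℕ) (hd : 1 ≤ d) (r : ℝ) (hr : 0 < r) (ℓ : ℕ) (v : ℕ → (Fin d → ℝ))
    (hstep : ∀ i : ℕ, 1 ≤ i → i ≤ ℓ → euclid (v i) (v (i-1)) ≤ r / 100)
    (hfar : r / 2 < euclid (v ℓ) (v 0)) :
    ∃ m : ℕ, 2 ≤ m ∧ ∃ j : ℕ → ℕ,
      j 1 = 0 ∧ j m = ℓ ∧
      (∀ i : ℕ, 1 ≤ i → i < m → j i < j (i+1)) ∧
      (∀ i : ℕ, 1 ≤ i → i < m →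
        r / 16 < euclid (v (j (i+1))) (v (j i)) ∧
        ∀ t : ℕ, j i ≤ t → t ≤ j (i+1) → euclid (v t) (v (j i)) < r / 2) := by
  classical
  set T : ℕ → ℕ := tau v r ℓ with hTdef
  have hT0 : T 0 = 0 := rfl
  have hTs : ∀ i, T (i+1) = nxt v r ℓ (T i) := fun i => rfl
  have hℓ1 : 1 ≤ ℓ := by
    by_contra hc
    have h0 : ℓ = 0 := by omega
    rw [h0, euclid_self] at hfar
    linarith
  have hnxt : ∀ j, (cand v r ℓ j).Nonempty → nxt v r ℓ j ∈ cand v r ℓ j :=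
    fun j h => Nat.sInf_mem h
  have hnxt_min : ∀ j k, k < nxt v r ℓ j → k ∉ cand v r ℓ j :=
    fun j k hk => Nat.notMem_of_lt_sInf hk
  -- termination: the greedy gets stuck at some index
  have hstuck_ex : ∃ i, ¬ (cand v r ℓ (T i)).Nonempty := by
    by_contra hc
    push_neg at hc
    have key : ∀ i, i ≤ T i ∧ T i ≤ ℓ := by
      intro i
      induction i with
      | zero => exact ⟨Nat.zero_le _, by rw [hT0]; exact Nat.zero_le _⟩
      | succ n ih =>
        have hm := hnxt _ (hc n)
        rw [← hTs n] at hm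
        obtain ⟨h1, h2, _⟩ := hm
        exact ⟨by omega, h1⟩
    have := key (ℓ+1)
    omega
  set M : ℕ := Nat.find hstuck_ex with hMdef
  have hMstuck : ¬ (cand v r ℓ (T M)).Nonempty := Nat.find_spec hstuck_ex
  have hMgood : ∀ i < M, (cand v r ℓ (T i)).Nonempty :=
    fun i hi => not_not.1 (Nat.find_min hstuck_ex hi)
  have hstep' : ∀ i < M, T i < T (i+1) ∧ T (i+1) ≤ ℓ ∧
      r/16 < euclid (v (T (i+1))) (v (T i)) := by
    intro i hi
    have hm := hnxt _ (hMgood i hi)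
    rw [← hTs i] at hm
    exact ⟨hm.2.1, hm.1, hm.2.2⟩
  have hTle : ∀ i ≤ M, T i ≤ ℓ := by
    intro i hi
    induction i with
    | zero => rw [hT0]; exact Nat.zero_le _
    | succ n _ => exact (hstep' n (by omega)).2.1
  -- points within a greedy segment stay close to the segment start
  have hseg : ∀ i < M, ∀ t, T i ≤ t → t ≤ T (i+1) →
      euclid (v t) (v (T i)) ≤ r/16 + r/100 := by
    intro i hi t h1 h2
    rcases eq_or_lt_of_le h1 with he | h1'
    · rw [← he, euclid_self]; linarith
    rcases eq_or_lt_of_le h2 with he2 | h2'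
    · -- t = T (i+1)
      have ht1 : 1 ≤ t := by omega
      have htl : t ≤ ℓ := by rw [he2]; exact (hstep' i hi).2.1
      have hsa := hstep t ht1 htl
      have hprev : euclid (v (t-1)) (v (T i)) ≤ r/16 := by
        rcases eq_or_lt_of_le (by omega : T i ≤ t - 1) with he3 | h3
        · rw [← he3, euclid_self]; linarith
        · have hne := hnxt_min (T i) (t-1) (by rw [← hTs i, ← he2]; omega)
          simp only [cand, Set.mem_setOf_eq, not_and, not_lt] at hne
          exact hne (by omega) h3
      calc euclid (v t) (v (T i)) ≤ euclid (v t) (v (t-1)) + euclid (v (t-1)) (v (T i)) :=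
            euclid_tri _ _ _
        _ ≤ r/100 + r/16 := add_le_add hsa hprev
        _ = r/16 + r/100 := by ring
    · -- T i < t < T (i+1)
      have hne := hnxt_min (T i) t (by rw [← hTs i]; exact h2')
      simp only [cand, Set.mem_setOf_eq, not_and, not_lt] at hne
      have htl : t ≤ ℓ := le_trans (le_of_lt h2') (hstep' i hi).2.1
      have := hne htl h1'
      linarith
  have hM1 : 1 ≤ M := by
    rcases Nat.eq_zero_or_pos M with h0 | h1
    · exfalso
      apply hMstuck
      rw [h0, hT0]
      exact ⟨ℓ, le_rfl, by omega, by linarith⟩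
    · exact h1
  -- the last greedy index still far (in path) from the endpoint
  set P : ℕ → Prop := fun i => r/16 < euclid (v ℓ) (v (T i)) with hPdef
  have hP0 : P 0 := by
    simp only [hPdef, hT0]
    linarith
  set istar : ℕ := Nat.findGreatest P M with histardef
  have histar_le : istar ≤ M := Nat.findGreatest_le M
  have hPistar : r/16 < euclid (v ℓ) (v (T istar)) :=
    Nat.findGreatest_spec (Nat.zero_le M) hP0
  have hnotP : ∀ i, istar < i → i ≤ M → euclid (v ℓ) (v (T i)) ≤ r/16 := by
    intro i h1 h2
    have := Nat.findGreatest_is_greatest (k := i) h1 h2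
    simp only [hPdef, not_lt] at this
    exact this
  rcases eq_or_lt_of_le histar_le with heq | hlt
  · -- Case istar = M : the greedy sequence reaches ℓ exactly
    have hτM : T M = ℓ := by
      have h1 : T M ≤ ℓ := hTle M le_rfl
      rcases eq_or_lt_of_le h1 with he | hl
      · exact he
      · exfalso
        apply hMstuck
        refine ⟨ℓ, le_rfl, hl, ?_⟩
        rw [← heq]
        exact hPistar
    refine ⟨M + 1, by omega, fun i => T (i-1), by simp [hT0], by simp [hτM], ?_, ?_⟩
    · intro i h1 h2
      have hi1 : i - 1 + 1 = i := by omega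
      have := (hstep' (i-1) (by omega)).1
      rw [hi1] at this
      simpa using this
    · intro i h1 h2
      have hi1 : i - 1 + 1 = i := by omega
      have hiM : i - 1 < M := by omega
      constructor
      · have := (hstep' (i-1) hiM).2.2
        rw [hi1] at this
        simpa using this
      · intro t ht1 ht2
        have ht2' : t ≤ T (i - 1 + 1) := by rw [hi1]; simpa using ht2
        have := hseg (i-1) hiM t ht1 ht2'
        linarith
  · -- Case istar < M : merge the tail into one final segment towards ℓ
    have hB2 : euclid (v (T (istar+1))) (v (T istar)) ≤ r/16 + r/100 :=
      hseg istar hlt (T (istar+1)) (hstep' istar hlt).1.le le_rfl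
    have hB1 : euclid (v ℓ) (v (T (istar+1))) ≤ r/16 := hnotP (istar+1) (by omega) (by omega)
    have hB3 : euclid (v ℓ) (v (T istar)) ≤ r/8 + r/100 := by
      calc euclid (v ℓ) (v (T istar))
          ≤ euclid (v ℓ) (v (T (istar+1))) + euclid (v (T (istar+1))) (v (T istar)) :=
            euclid_tri _ _ _
        _ ≤ r/8 + r/100 := by linarith
    have hτiℓ : T istar < ℓ := by
      have h1 : T istar ≤ ℓ := hTle istar (le_of_lt hlt)
      rcases eq_or_lt_of_le h1 with he | hl
      · exfalso; rw [he, euclid_self] at hPistar; linarith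
      · exact hl
    have hstuckb : ∀ t, T M ≤ t → t ≤ ℓ → euclid (v t) (v (T M)) ≤ r/16 := by
      intro t h1 h2
      rcases eq_or_lt_of_le h1 with he | hl
      · rw [← he, euclid_self]; linarith
      · by_contra hc
        push_neg at hc
        exact hMstuck ⟨t, h2, hl, hc⟩
    have hMℓ : euclid (v ℓ) (v (T M)) ≤ r/16 := hnotP M hlt le_rfl
    have hfinal : ∀ t, T istar ≤ t → t ≤ ℓ → euclid (v t) (v (T istar)) < r/2 := by
      intro t ht1 ht2
      set i : ℕ := Nat.findGreatest (fun i => T i ≤ t) M with hidef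
      have hiM : i ≤ M := Nat.findGreatest_le M
      have histar_i : istar ≤ i := Nat.le_findGreatest (le_of_lt hlt) ht1
      have hTit : T i ≤ t := Nat.findGreatest_spec (P := fun i => T i ≤ t) (n := M) (le_of_lt hlt) ht1
      rcases eq_or_lt_of_le hiM with hieq | hilt
      · -- i = M : t lies beyond the last greedy index
        have h1 : euclid (v t) (v (T M)) ≤ r/16 := hstuckb t (by rw [← hieq]; exact hTit) ht2
        have h2 : euclid (v (T M)) (v (T istar)) ≤
            euclid (v (T M)) (v ℓ) + euclid (v ℓ) (v (T istar)) := euclid_tri _ _ _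
        have h3 : euclid (v (T M)) (v ℓ) = euclid (v ℓ) (v (T M)) := euclid_comm _ _
        have h4 : euclid (v t) (v (T istar)) ≤
            euclid (v t) (v (T M)) + euclid (v (T M)) (v (T istar)) := euclid_tri _ _ _
        rw [h3] at h2
        linarith
      · -- i < M : t lies in the greedy segment [T i, T (i+1)]
        have hti1 : t ≤ T (i+1) := by
          have := Nat.findGreatest_is_greatest (P := fun i => T i ≤ t) (n := M) (k := i+1) (by omega) (by omega)
          simp only [not_le] at this
          exact le_of_lt this
        have hsegb := hseg i hilt t hTit hti1
        rcases eq_or_lt_of_le histar_i with he | hlt2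
        · rw [← he] at hsegb; linarith
        · have hiℓ : euclid (v ℓ) (v (T i)) ≤ r/16 := hnotP i hlt2 (le_of_lt hilt)
          have h2 : euclid (v (T i)) (v (T istar)) ≤
              euclid (v (T i)) (v ℓ) + euclid (v ℓ) (v (T istar)) := euclid_tri _ _ _
          have h3 : euclid (v (T i)) (v ℓ) = euclid (v ℓ) (v (T i)) := euclid_comm _ _
          have h4 : euclid (v t) (v (T istar)) ≤
              euclid (v t) (v (T i)) + euclid (v (T i)) (v (T istar)) := euclid_tri _ _ _
          rw [h3] at h2
          linarith
    refine ⟨istar + 2, by omega, fun i => if i ≤ istar + 1 then T (i-1) else ℓ, ?_, ?_, ?_, ?_⟩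
    · simp only [if_pos (by omega : 1 ≤ istar + 1)]
      exact hT0
    · simp only [if_neg (by omega : ¬ istar + 2 ≤ istar + 1)]
    · intro i h1 h2
      have hji : (if i ≤ istar + 1 then T (i-1) else ℓ) = T (i-1) := if_pos (by omega)
      simp only [hji]
      by_cases hc : i + 1 ≤ istar + 1
      · simp only [if_pos hc, Nat.add_sub_cancel]
        have hi1 : i - 1 + 1 = i := by omega
        have := (hstep' (i-1) (by omega)).1
        rwa [hi1] at this
      · simp only [if_neg hc]
        have : i - 1 = istar := by omega
        rw [this]
        exact hτiℓ
    · intro i h1 h2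
      have hji : (if i ≤ istar + 1 then T (i-1) else ℓ) = T (i-1) := if_pos (by omega)
      simp only [hji]
      by_cases hc : i + 1 ≤ istar + 1
      · simp only [if_pos hc, Nat.add_sub_cancel]
        have hi1 : i - 1 + 1 = i := by omega
        have hiM : i - 1 < M := by omega
        constructor
        · have := (hstep' (i-1) hiM).2.2
          rwa [hi1] at this
        · intro t ht1 ht2
          have ht2' : t ≤ T (i - 1 + 1) := by rw [hi1]; exact ht2
          have := hseg (i-1) hiM t ht1 ht2'
          linarith
      · simp only [if_neg hc]
        have hieq : i - 1 = istar := by omega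
        rw [hieq]
        exact ⟨hPistar, fun t ht1 ht2 => hfinal t ht1 ht2⟩
end
end
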